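/- arXiv:0906.1829 — 9 statements merged into one kernel-verified Lean document; each statement's English description precedes it below -/
import Mathlib

section
/- Let A be a Hopf algebra over ℂ with comultiplication Δ, counit ε and antipode S satisfying S ∘ S = id, let h : A → ℂ be a two-sided invariant unital functional, i.e. h(1) = 1, (id ⊗ h)(Δ a) = h(a)·1 and (h ⊗ id)(Δ a) = h(a)·1 for all a ∈ A, let H be a complex vector space, and let ρ : H → H ⊗ A be a corepresentation of A on H, i.e. (ρ ⊗ id) ∘ ρ = (id ⊗ Δ) ∘ ρ and (id ⊗ ε) ∘ ρ = id_H. Define ρ† : H ⊗ A → H by ρ†(ξ ⊗ a) = (id ⊗ h)( ((id ⊗ S)(ρ(ξ))) · (1 ⊗ a) ). Then ρ ∘ ρ† = (ρ† ⊗ id_A) ∘ (id_H ⊗ Δ) as linear maps H ⊗ A → H ⊗ A. -/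
/-!
In Sweedler notation `ρ ξ = ξ₀ ⊗ ξ₁`, both sides applied to `ξ ⊗ a` have the form
`(id ⊗ T)(ρ ξ)`: after coassociativity of `ρ`, the left side has `T b = b₁ h(S(b₂) a)` and the
right side `T b = h(S(b) a₁) a₂`. These agree by strong invariance of `h`. Left invariance
applied to `S(y) a`, together with `Δ ∘ S = (S ⊗ S) ∘ flip ∘ Δ`, gives
`h(S(y) a) 1 = S(y₁) h(S(y₂) a₁) a₂`; inserting this into `b₁ h(S(b₂) a)` produces
`b₁ S(b₂) T(b₃) = T(b)`. The anti-comultiplicativity of `S` holds because `(S ⊗ S) ∘ flip ∘ Δ`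
and `Δ ∘ S` are a left and a right convolution inverse of `Δ`.
-/

open TensorProduct LinearMap Coalgebra HopfAlgebra WithConv
open Algebra.TensorProduct (includeLeft includeRight)
open scoped RingTheory.LinearMap

section

variable {R H M A B : Type*} [CommSemiring R] [AddCommMonoid H] [Module R H]
  [AddCommMonoid M] [Module R M] [AddCommMonoid A] [Module R A] [AddCommMonoid B] [Module R B]

lemma LinearMap.apply_rid_lTensor (g : H →ₗ[R] M) (f : A →ₗ[R] R) (u : H ⊗[R] A) :
    g (TensorProduct.rid R H (lTensor H f u)) =
      TensorProduct.rid R M (lTensor M f (rTensor A g u)) := by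
  induction u with
  | zero => simp
  | add u v hu hv => simp [hu, hv]
  | tmul ξ a => simp

lemma TensorProduct.rid_lTensor_assoc_symm (f : A →ₗ[R] R) (u : H ⊗[R] (B ⊗[R] A)) :
    TensorProduct.rid R (H ⊗[R] B)
        (lTensor (H ⊗[R] B) f ((TensorProduct.assoc R H B A).symm u)) =
      lTensor H ((TensorProduct.rid R B).toLinearMap ∘ₗ lTensor B f) u := by
  induction u with
  | zero => simp
  | add u v hu hv => simp [hu, hv]
  | tmul ξ t =>
    induction t with
    | zero => simp
    | add u v hu hv => simp [tmul_add, hu, hv]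
    | tmul b a => simp [tmul_smul]

end

namespace HopfAlgebra

variable {R A : Type*} [CommSemiring R] [Semiring A] [HopfAlgebra R A]

local notation "𝑺" => antipode R (A := A)

lemma mul_map_includeLeft_antipode_comul_comp_comul :
    μ ∘ₗ map ((includeLeft : A →ₐ[R] A ⊗[R] A).toLinearMap ∘ₗ 𝑺) δ ∘ₗ δ =
      TensorProduct.mk R A A 1 := by
  have hassoc : μ ∘ₗ map ((includeLeft : A →ₐ[R] A ⊗[R] A).toLinearMap ∘ₗ 𝑺) .id ∘ₗ
      (TensorProduct.assoc R A A A).toLinearMap = rTensor A (μ ∘ₗ rTensor A 𝑺) := by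
    ext x y z; simp
  ext a
  have := congr($hassoc (rTensor A δ (δ a)))
  rw [← rTensor_comp_apply, LinearMap.comp_assoc, mul_antipode_rTensor_comul] at this
  simpa [coassoc_apply, ← lTensor_comp_apply, rTensor_comp_apply] using this

lemma comul_left_inv :
    toConv (map 𝑺 𝑺 ∘ₗ (TensorProduct.comm R A A).toLinearMap ∘ₗ δ) *
      toConv (δ : A →ₗ[R] A ⊗[R] A) = 1 := by
  apply WithConv.ext
  simp only [LinearMap.convMul_def, LinearMap.convOne_def, ofConv_toConv]
  -- `(S p ⊗ S y) Δq = (1 ⊗ S y)((S p ⊗ 1) Δq)`, and the second factor collapses on `Δ`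
  have hsplit : μ ∘ₗ map (map 𝑺 𝑺 ∘ₗ (TensorProduct.comm R A A).toLinearMap) δ ∘ₗ
      (TensorProduct.assoc R A A A).symm.toLinearMap =
      μ ∘ₗ map ((includeRight : A →ₐ[R] A ⊗[R] A).toLinearMap ∘ₗ 𝑺)
        (μ ∘ₗ map ((includeLeft : A →ₐ[R] A ⊗[R] A).toLinearMap ∘ₗ 𝑺) δ) := by
    ext y p q
    simp [← mul_assoc, Algebra.TensorProduct.tmul_mul_tmul]
  have hunit : μ ∘ₗ map ((includeRight : A →ₐ[R] A ⊗[R] A).toLinearMap ∘ₗ 𝑺)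
      (TensorProduct.mk R A A 1) = includeRight.toLinearMap ∘ₗ μ ∘ₗ rTensor A 𝑺 := by
    ext y z; simp
  ext a
  calc μ (map (map 𝑺 𝑺 ∘ₗ (TensorProduct.comm R A A).toLinearMap ∘ₗ δ) δ (δ a))
      = μ (map (map 𝑺 𝑺 ∘ₗ (TensorProduct.comm R A A).toLinearMap) δ
          ((TensorProduct.assoc R A A A).symm (lTensor A δ (δ a)))) := by
        rw [coassoc_symm_apply, map_rTensor, LinearMap.comp_assoc]
    _ = μ (map ((includeRight : A →ₐ[R] A ⊗[R] A).toLinearMap ∘ₗ 𝑺)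
          (μ ∘ₗ map ((includeLeft : A →ₐ[R] A ⊗[R] A).toLinearMap ∘ₗ 𝑺) δ)
          (lTensor A δ (δ a))) := congr($hsplit _)
    _ = includeRight (μ (rTensor A 𝑺 (δ a))) := by
        rw [map_lTensor, LinearMap.comp_assoc, mul_map_includeLeft_antipode_comul_comp_comul]
        exact congr($hunit _)
    _ = algebraMap R (A ⊗[R] A) (ε a) := by simp

theorem comul_antipode (a : A) :
    δ (𝑺 a) = map 𝑺 𝑺 (TensorProduct.comm R A A (δ a)) := by
  have := left_inv_eq_right_inv (comul_left_inv (R := R) (A := A)) comul_right_inv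
  exact congr(ofConv $this a).symm

lemma mul_lTensor_mul_map_antipode_comul (g : A →ₗ[R] A) (b : A) :
    μ (lTensor A (μ ∘ₗ map 𝑺 g ∘ₗ δ) (δ b)) = g b := by
  have hassoc : μ ∘ₗ lTensor A (μ ∘ₗ map 𝑺 g) ∘ₗ (TensorProduct.assoc R A A A).toLinearMap =
      μ ∘ₗ map (μ ∘ₗ lTensor A 𝑺) g := by
    ext; simp [mul_assoc]
  have hcounit : μ ∘ₗ map (Algebra.linearMap R A ∘ₗ (ε : A →ₗ[R] R)) g =
      g ∘ₗ (TensorProduct.lid R A).toLinearMap ∘ₗ rTensor A ε := by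
    ext; simp [← Algebra.smul_def]
  calc μ (lTensor A (μ ∘ₗ map 𝑺 g ∘ₗ δ) (δ b))
      = μ (map (μ ∘ₗ lTensor A 𝑺) g (rTensor A δ (δ b))) := by
        simpa [lTensor_comp_apply] using congr($hassoc (rTensor A δ (δ b)))
    _ = μ (map (Algebra.linearMap R A ∘ₗ ε) g (δ b)) := by
        rw [map_rTensor, LinearMap.comp_assoc, mul_antipode_lTensor_comul]
    _ = g b := by
        simpa using congr($hcounit (δ b))

variable (h : A →ₗ[R] R)

noncomputable def antipodePairing : A →ₗ[R] A →ₗ[R] R :=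
  (LinearMap.mul R A ∘ₗ 𝑺).compr₂ h

@[simp]
lemma antipodePairing_apply (x a : A) : antipodePairing h x a = h (𝑺 x * a) := rfl

noncomputable def antipodeSlice : A ⊗[R] A →ₗ[R] A →ₗ[R] A :=
  lift (smulRightₗ ∘ₗ (antipodePairing h).flip)

@[simp]
lemma antipodeSlice_tmul (p q x : A) : antipodeSlice h (p ⊗ₜ q) x = h (𝑺 x * p) • q := rfl

variable {h}

lemma smul_one_eq_mul_map_antipode_antipodeSlice
    (hinv : ∀ c, TensorProduct.lid R A (rTensor A h (δ c)) = h c • 1) (a y : A) :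
    h (𝑺 y * a) • (1 : A) = μ (map 𝑺 (antipodeSlice h (δ a)) (δ y)) := by
  rw [← hinv, Bialgebra.comul_mul, comul_antipode]
  induction comul (R := R) y with
  | zero => simp
  | add u v hu hv => simp [add_mul, hu, hv]
  | tmul p q =>
    induction comul (R := R) a with
    | zero => simp
    | add u v hu hv => simp_all [mul_add]
    | tmul r s => simp [Algebra.TensorProduct.tmul_mul_tmul]

theorem rid_lTensor_antipodePairing_flip_comul
    (hinv : ∀ c, TensorProduct.lid R A (rTensor A h (δ c)) = h c • 1) (a b : A) :
    TensorProduct.rid R A (lTensor A ((antipodePairing h).flip a) (δ b)) =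
      antipodeSlice h (δ a) b := by
  rw [← mul_lTensor_mul_map_antipode_comul (antipodeSlice h (δ a)) b]
  induction comul (R := R) b with
  | zero => simp
  | add u v hu hv => simp [hu, hv]
  | tmul x y => simp [← smul_one_eq_mul_map_antipode_antipodeSlice hinv]

lemma rTensor_assoc_symm_tmul_eq_lTensor_antipodeSlice {H : Type*} [AddCommMonoid H]
    [Module R H] (ρ : H →ₗ[R] H ⊗[R] A) (ρdag : H ⊗[R] A →ₗ[R] H)
    (hdag : ∀ ξ a, ρdag (ξ ⊗ₜ a) =
      TensorProduct.rid R H (lTensor H ((antipodePairing h).flip a) (ρ ξ)))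
    (ξ : H) (t : A ⊗[R] A) :
    rTensor A ρdag ((TensorProduct.assoc R H A A).symm (ξ ⊗ₜ t)) =
      lTensor H (antipodeSlice h t) (ρ ξ) := by
  induction t with
  | zero => simp
  | add u v hu hv => simp [tmul_add, hu, hv]
  | tmul p q =>
    rw [TensorProduct.assoc_symm_tmul, rTensor_tmul, hdag]
    induction ρ ξ with
    | zero => simp
    | add u v hu hv => simp [add_tmul, hu, hv]
    | tmul x b => simp [smul_tmul]

end HopfAlgebra

theorem stmt5_general
    (A : Type*) [Semiring A] [HopfAlgebra ℂ A]
    (h : A →ₗ[ℂ] ℂ)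
    -- left invariance: `(h ⊗ id)(Δ a) = h(a) · 1`
    (hinvL : ∀ a : A,
      (TensorProduct.lid ℂ A) ((LinearMap.rTensor A h) (Coalgebra.comul (R := ℂ) a)) =
        h a • (1 : A))
    (H : Type*) [AddCommGroup H] [Module ℂ H]
    (ρ : H →ₗ[ℂ] H ⊗[ℂ] A)
    -- coassociativity: `(ρ ⊗ id) ∘ ρ = (id ⊗ Δ) ∘ ρ` after reassociation
    (hcoassoc : ∀ ξ : H,
      (TensorProduct.assoc ℂ H A A) ((LinearMap.rTensor A ρ) (ρ ξ)) =
        (LinearMap.lTensor H (Coalgebra.comul (R := ℂ))) (ρ ξ))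
    (ρdag : H ⊗[ℂ] A →ₗ[ℂ] H)
    -- `ρ†(ξ ⊗ a) = (id ⊗ h)(((id ⊗ S)(ρ ξ)) · (1 ⊗ a))`
    (hρdag : ∀ (ξ : H) (a : A),
      ρdag (ξ ⊗ₜ[ℂ] a) =
        (TensorProduct.rid ℂ H) ((LinearMap.lTensor H h)
          ((LinearMap.lTensor H (LinearMap.mulRight ℂ a))
            ((LinearMap.lTensor H (HopfAlgebra.antipode (R := ℂ))) (ρ ξ))))) :
    ∀ w : H ⊗[ℂ] A,
      ρ (ρdag w) =
        (LinearMap.rTensor A ρdag)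
          ((TensorProduct.assoc ℂ H A A).symm
            ((LinearMap.lTensor H (Coalgebra.comul (R := ℂ))) w)) := by
  have hdag : ∀ ξ a, ρdag (ξ ⊗ₜ a) =
      TensorProduct.rid ℂ H (lTensor H ((antipodePairing h).flip a) (ρ ξ)) := by
    intro ξ a
    rw [hρdag, ← lTensor_comp_apply, ← lTensor_comp_apply]
    rfl
  intro w
  induction w with
  | zero => simp
  | add u v hu hv => simp only [map_add, hu, hv]
  | tmul ξ a =>
    calc ρ (ρdag (ξ ⊗ₜ a))
        = TensorProduct.rid ℂ (H ⊗[ℂ] A) (lTensor (H ⊗[ℂ] A) ((antipodePairing h).flip a)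
            ((TensorProduct.assoc ℂ H A A).symm (lTensor H δ (ρ ξ)))) := by
          rw [hdag, apply_rid_lTensor, ← hcoassoc, LinearEquiv.symm_apply_apply]
      _ = lTensor H (antipodeSlice h (δ a)) (ρ ξ) := by
          have hslice : (TensorProduct.rid ℂ A).toLinearMap ∘ₗ
              lTensor A ((antipodePairing h).flip a) ∘ₗ δ = antipodeSlice h (δ a) :=
            LinearMap.ext (rid_lTensor_antipodePairing_flip_comul hinvL a)
          rw [rid_lTensor_assoc_symm, ← lTensor_comp_apply, LinearMap.comp_assoc, hslice]
      _ = _ := (rTensor_assoc_symm_tmul_eq_lTensor_antipodeSlice ρ ρdag hdag ξ _).symm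

/-- For a corepresentation `ρ : H → H ⊗ A` of a Hopf algebra `A` with
involutive antipode (`S ∘ S = id`) and a two-sided invariant unital functional `h`, the adjoint
`ρ†(ξ ⊗ a) = (id ⊗ h)(((id ⊗ S)(ρ ξ)) · (1 ⊗ a))` satisfies
`ρ ∘ ρ† = (ρ† ⊗ id) ∘ (id ⊗ Δ)` on `H ⊗ A`. -/
theorem stmt5
    (A : Type*) [Semiring A] [HopfAlgebra ℂ A]
    (hKac : ∀ a : A, HopfAlgebra.antipode (R := ℂ) (HopfAlgebra.antipode (R := ℂ) a) = a)
    (h : A →ₗ[ℂ] ℂ) (hh1 : h 1 = 1)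
    -- right invariance: `(id ⊗ h)(Δ a) = h(a) · 1`
    (hinvR : ∀ a : A,
      (TensorProduct.rid ℂ A) ((LinearMap.lTensor A h) (Coalgebra.comul (R := ℂ) a)) =
        h a • (1 : A))
    -- left invariance: `(h ⊗ id)(Δ a) = h(a) · 1`
    (hinvL : ∀ a : A,
      (TensorProduct.lid ℂ A) ((LinearMap.rTensor A h) (Coalgebra.comul (R := ℂ) a)) =
        h a • (1 : A))
    (H : Type*) [AddCommGroup H] [Module ℂ H]
    (ρ : H →ₗ[ℂ] H ⊗[ℂ] A)
    -- coassociativity: `(ρ ⊗ id) ∘ ρ = (id ⊗ Δ) ∘ ρ` after reassociation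
    (hcoassoc : ∀ ξ : H,
      (TensorProduct.assoc ℂ H A A) ((LinearMap.rTensor A ρ) (ρ ξ)) =
        (LinearMap.lTensor H (Coalgebra.comul (R := ℂ))) (ρ ξ))
    -- counit axiom: `(id ⊗ ε) ∘ ρ = id`
    (hcounit : ∀ ξ : H,
      (TensorProduct.rid ℂ H) ((LinearMap.lTensor H (Coalgebra.counit (R := ℂ))) (ρ ξ)) = ξ)
    (ρdag : H ⊗[ℂ] A →ₗ[ℂ] H)
    -- `ρ†(ξ ⊗ a) = (id ⊗ h)(((id ⊗ S)(ρ ξ)) · (1 ⊗ a))`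
    (hρdag : ∀ (ξ : H) (a : A),
      ρdag (ξ ⊗ₜ[ℂ] a) =
        (TensorProduct.rid ℂ H) ((LinearMap.lTensor H h)
          ((LinearMap.lTensor H (LinearMap.mulRight ℂ a))
            ((LinearMap.lTensor H (HopfAlgebra.antipode (R := ℂ))) (ρ ξ))))) :
    ∀ w : H ⊗[ℂ] A,
      ρ (ρdag w) =
        (LinearMap.rTensor A ρdag)
          ((TensorProduct.assoc ℂ H A A).symm
            ((LinearMap.lTensor H (Coalgebra.comul (R := ℂ))) w)) :=
  stmt5_general A h hinvL H ρ hcoassoc ρdag hρdag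
end

section
/- Let A be a coalgebra over a field k with coassociative comultiplication Δ, let B be a k-vector space with a distinguished element 1_B, and let Π : A → B be a k-linear map. Define A^Π = { a ∈ A : (Π ⊗ id_A)(Δ a) = 1_B ⊗ a }. Then A^Π is a right coideal of A: for every a ∈ A^Π one has ((Π ⊗ id_A ⊗ id_A)((Δ ⊗ id_A)(Δ a))) = 1_B ⊗ Δ a, and consequently Δ a lies in the subspace A^Π ⊗ A of A ⊗ A. -/
/-!
By coassociativity, `(Φ ⊗ id ⊗ id)(Δ ⊗ id)Δ a = (id_B ⊗ Δ)(Φ ⊗ id)Δ a`, which for `a ∈ A^Φ` is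
`1_B ⊗ Δ a`. This says that `Δ a` lies in the kernel of `T ⊗ id_A`, where
`T a = (Φ ⊗ id)(Δ a) - 1_B ⊗ a`, and since `A` is flat over a field,
`ker (T ⊗ id_A) = ker T ⊗ A = A^Φ ⊗ A`.
-/

open TensorProduct

namespace LinearMap

variable {R M N P Q : Type*} [CommRing R] [AddCommGroup M] [Module R M] [AddCommGroup N]
  [Module R N] [AddCommGroup P] [Module R P] [AddCommGroup Q] [Module R Q]

theorem mem_span_tmul_of_rTensor_apply_eq [Module.Flat R Q] (f g : M →ₗ[R] N)
    {x : M ⊗[R] Q} (h : f.rTensor Q x = g.rTensor Q x) :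
    x ∈ Submodule.span R {z | ∃ m ∈ eqLocus f g, ∃ q : Q, z = m ⊗ₜ q} := by
  have hexact : Function.Exact ((eqLocus f g).subtype.rTensor Q) ((f - g).rTensor Q) := by
    rw [eqLocus_eq_ker_sub]
    exact Module.Flat.rTensor_exact Q (f - g).exact_subtype_ker_map
  obtain ⟨w, rfl⟩ := (hexact x).mp (by rw [rTensor_sub, sub_apply, h, sub_self])
  clear h
  induction w with
  | zero => simp
  | add u v hu hv => rw [map_add]; exact add_mem hu hv
  | tmul m q => exact Submodule.subset_span ⟨m, m.2, q, rfl⟩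

theorem rTensor_mk_apply (n : N) (x : M ⊗[R] Q) :
    (TensorProduct.mk R N M n).rTensor Q x = (TensorProduct.assoc R N M Q).symm (n ⊗ₜ x) := by
  induction x with
  | zero => simp
  | add u v hu hv => simp [tmul_add, hu, hv]
  | tmul m q => simp

theorem rTensor_rTensor_assoc_symm_apply (f : M →ₗ[R] N) (x : M ⊗[R] (P ⊗[R] Q)) :
    (f.rTensor P).rTensor Q ((TensorProduct.assoc R M P Q).symm x) =
      (TensorProduct.assoc R N P Q).symm (f.rTensor (P ⊗[R] Q) x) := by
  rw [rTensor_tensor]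
  simp

end LinearMap

namespace Coalgebra

variable {R A B : Type*} [CommRing R] [AddCommGroup A] [Module R A] [Coalgebra R A]
  [AddCommGroup B] [Module R B]

def homogeneousSpace (Φ : A →ₗ[R] B) (b : B) : Submodule R A :=
  LinearMap.eqLocus (Φ.rTensor A ∘ₗ comul) (TensorProduct.mk R B A b)

theorem rTensor_rTensor_rTensor_comul_comul (Φ : A →ₗ[R] B) (a : A) :
    (Φ.rTensor A).rTensor A (comul.rTensor A (comul a)) =
      (_root_.TensorProduct.assoc R B A A).symm
        (comul.lTensor B (Φ.rTensor A (comul (R := R) a))) := by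
  rw [← coassoc_symm_apply, LinearMap.rTensor_rTensor_assoc_symm_apply, ← LinearMap.comp_apply,
    LinearMap.rTensor_comp_lTensor, ← LinearMap.lTensor_comp_rTensor, LinearMap.comp_apply]

theorem rTensor_rTensor_rTensor_comul_comul_of_mem {Φ : A →ₗ[R] B} {b : B} {a : A}
    (ha : a ∈ homogeneousSpace Φ b) :
    (Φ.rTensor A).rTensor A (comul.rTensor A (comul a)) =
      (_root_.TensorProduct.assoc R B A A).symm (b ⊗ₜ comul (R := R) a) := by
  rw [rTensor_rTensor_rTensor_comul_comul, show Φ.rTensor A (comul a) = b ⊗ₜ a from ha,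
    LinearMap.lTensor_tmul]

theorem comul_mem_span_homogeneousSpace_tmul [Module.Flat R A] {Φ : A →ₗ[R] B} {b : B}
    {a : A} (ha : a ∈ homogeneousSpace Φ b) :
    comul a ∈ Submodule.span R {z | ∃ x ∈ homogeneousSpace Φ b, ∃ y : A, z = x ⊗ₜ[R] y} := by
  apply LinearMap.mem_span_tmul_of_rTensor_apply_eq
  rw [LinearMap.rTensor_comp_apply, rTensor_rTensor_rTensor_comul_comul_of_mem ha,
    LinearMap.rTensor_mk_apply]

end Coalgebra

/-- For a coalgebra `A` over a field `k`, a vector space `B` with a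
distinguished element `1_B`, and a linear map `Φ : A → B`, the quantum homogeneous space
`A^Φ = { a : (Φ ⊗ id)(Δ a) = 1_B ⊗ a }` is a right coideal: for `a ∈ A^Φ` one has
`(Φ ⊗ id ⊗ id)((Δ ⊗ id)(Δ a)) = 1_B ⊗ Δ a`, and consequently `Δ a` lies in the subspace
`A^Φ ⊗ A` of `A ⊗ A`. -/
theorem stmt8
    (k A B : Type*) [Field k]
    [AddCommGroup A] [Module k A] [Coalgebra k A]
    [AddCommGroup B] [Module k B] (oneB : B)
    (Φ : A →ₗ[k] B) :
    ∀ a ∈ {a : A | (LinearMap.rTensor A Φ) (Coalgebra.comul (R := k) a) = oneB ⊗ₜ[k] a},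
      (LinearMap.rTensor A (LinearMap.rTensor A Φ))
          ((LinearMap.rTensor A (Coalgebra.comul (R := k)))
            (Coalgebra.comul (R := k) a)) =
        (TensorProduct.assoc k B A A).symm (oneB ⊗ₜ[k] Coalgebra.comul (R := k) a) ∧
      Coalgebra.comul (R := k) a ∈
        Submodule.span k {z : A ⊗[k] A |
          ∃ x ∈ {a : A |
              (LinearMap.rTensor A Φ) (Coalgebra.comul (R := k) a) = oneB ⊗ₜ[k] a},
            ∃ y : A, z = x ⊗ₜ[k] y} := fun _ ha =>
  ⟨Coalgebra.rTensor_rTensor_rTensor_comul_comul_of_mem (Φ := Φ) ha,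
    Coalgebra.comul_mem_span_homogeneousSpace_tmul (Φ := Φ) ha⟩
end

section
/- Let A be a Hopf ∗-algebra over ℂ: a Hopf algebra (comultiplication Δ, counit ε, antipode S) equipped with a star-ring and star-module structure over ℂ such that Δ(a★) = (★ ⊗ ★)(Δ a) and ε(a★) = conj(ε(a)) for all a, and assume the Kac condition S ∘ S = id. Let φ : A → ℂ be a linear functional with φ(1) = 1 and φ(a★ · a) ≥ 0 for all a ∈ A (a state). Then φ ∘ S is again a state: (φ ∘ S)(1) = 1 and (φ ∘ S)(a★ · a) ≥ 0 for all a ∈ A. -/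
open scoped TensorProduct ComplexOrder

/-!
Since `S` is unital and antimultiplicative, `S (a★ a) = S a · S (a★)`, so it suffices that `S`
commutes with `★`: then `S (a★ a) = b★ b` for `b = (S a)★`.

Put `T x = (S x★)★`. Applying `S` to `∑ a₁ S(a₂) = ε(a)` and using `S² = id` gives
`∑ a₂ S(a₁) = ε(a)`. Taking this at `a★`, whose coproduct is `∑ a₁★ ⊗ a₂★`, and applying `★`
yields `∑ T(a₁) a₂ = ε(a)`: `T` is a left convolution inverse of `id`, whose right inverse is `S`,
so `T = S`.
-/

open Coalgebra HopfAlgebra WithConv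

lemma TensorProduct.eq_star_of_map_add_of_map_tmul {R M N : Type*} [CommSemiring R] [StarRing R]
    [AddCommMonoid M] [StarAddMonoid M] [Module R M] [StarModule R M]
    [AddCommMonoid N] [StarAddMonoid N] [Module R N] [StarModule R N]
    {f : M ⊗[R] N → M ⊗[R] N} (hadd : ∀ u v, f (u + v) = f u + f v)
    (htmul : ∀ x y, f (x ⊗ₜ[R] y) = star x ⊗ₜ[R] star y) (u : M ⊗[R] N) :
    f u = star u := by
  induction u using TensorProduct.induction_on with
  | zero => simpa using htmul 0 0
  | tmul x y => exact htmul x y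
  | add u v hu hv => rw [hadd, hu, hv, star_add]

section

variable {R A : Type*} [CommSemiring R]

namespace HopfAlgebra

lemma sum_right_mul_antipode_left_eq_algebraMap_counit [Semiring A] [HopfAlgebra R A]
    (hKac : ∀ a : A, antipode R (antipode R a) = a) {a : A} {ι : Type*} (r : Repr R a ι) :
    ∑ i ∈ r.index, r.right i * antipode R (r.left i) = algebraMap R A (counit a) := by
  simpa [map_sum, antipode_mul_antidistrib, hKac, Algebra.algebraMap_eq_smul_one]
    using congr(antipode R $(sum_mul_antipode_eq_algebraMap_counit r))

end HopfAlgebra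

variable [StarRing R]

def Coalgebra.Repr.mapStar [AddCommMonoid A] [StarAddMonoid A] [Module R A] [StarModule R A]
    [CoalgebraStruct R A] (hcomul : ∀ a : A, comul (star a) = star (comul (R := R) a))
    {a : A} {ι : Type*} (r : Repr R a ι) : Repr R (star a) ι where
  index := r.index
  left i := star (r.left i)
  right i := star (r.right i)
  eq := by simp [hcomul, ← r.eq, star_sum]

namespace HopfAlgebra

variable [Semiring A] [StarRing A] [HopfAlgebra R A] [StarModule R A]

theorem antipode_star (hcomul : ∀ a : A, comul (star a) = star (comul (R := R) a))
    (hcounit : ∀ a : A, counit (star a) = star (counit (R := R) a))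
    (hKac : ∀ a : A, antipode R (antipode R a) = a) (a : A) :
    antipode R (star a) = star (antipode R a) := by
  have hinv : star (toConv (antipode R (A := A))) * toConv LinearMap.id = 1 := by
    ext b
    have h := sum_right_mul_antipode_left_eq_algebraMap_counit hKac ((ℛ R b).mapStar hcomul)
    simp only [Coalgebra.Repr.mapStar, hcounit, algebraMap_star_comm] at h
    rw [(ℛ R b).convMul_apply, LinearMap.convOne_apply, ← star_star (algebraMap R A _), ← h,
      star_sum]
    simp
  have hself : IsSelfAdjoint (toConv (antipode R (A := A))) :=
    left_inv_eq_right_inv hinv LinearMap.id_mul_antipode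
  exact (LinearMap.IntrinsicStar.isSelfAdjoint_iff_map_star _).mp hself a

end HopfAlgebra

end

/-- For a Hopf ∗-algebra `A` over ℂ (`Δ(a★) = (★ ⊗ ★)(Δ a)`,
`ε(a★) = conj (ε a)`) of Kac type (`S ∘ S = id`), the composition of a state `φ` with the
antipode is again a state: `(φ ∘ S)(1) = 1` and `(φ ∘ S)(a★ a) ≥ 0` for all `a`.
The map `(★ ⊗ ★)` on `A ⊗ A` is encoded by an additive map `sT` acting on elementary tensors
by `x ⊗ y ↦ x★ ⊗ y★`. -/
theorem stmt11
    (A : Type*) [Ring A] [HopfAlgebra ℂ A] [StarRing A] [StarModule ℂ A]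
    (sT : A ⊗[ℂ] A → A ⊗[ℂ] A)
    (hsT_add : ∀ u v : A ⊗[ℂ] A, sT (u + v) = sT u + sT v)
    (hsT_tmul : ∀ x y : A, sT (x ⊗ₜ[ℂ] y) = star x ⊗ₜ[ℂ] star y)
    -- `Δ(a★) = (★ ⊗ ★)(Δ a)`
    (hcomul_star : ∀ a : A,
      Coalgebra.comul (R := ℂ) (star a) = sT (Coalgebra.comul (R := ℂ) a))
    -- `ε(a★) = conj (ε a)`
    (hcounit_star : ∀ a : A,
      Coalgebra.counit (R := ℂ) (star a) = starRingEnd ℂ (Coalgebra.counit (R := ℂ) a))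
    -- Kac condition `S ∘ S = id`
    (hKac : ∀ a : A, HopfAlgebra.antipode (R := ℂ) (HopfAlgebra.antipode (R := ℂ) a) = a)
    (φ : A →ₗ[ℂ] ℂ) (hφ1 : φ 1 = 1)
    (hφpos : ∀ a : A, 0 ≤ φ (star a * a)) :
    φ (HopfAlgebra.antipode (R := ℂ) (1 : A)) = 1 ∧
    ∀ a : A, 0 ≤ φ (HopfAlgebra.antipode (R := ℂ) (star a * a)) := by
  have hcomul : ∀ a : A, Coalgebra.comul (star a) = star (Coalgebra.comul (R := ℂ) a) :=
    fun a => (hcomul_star a).trans <|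
      TensorProduct.eq_star_of_map_add_of_map_tmul hsT_add hsT_tmul _
  refine ⟨by rw [antipode_one, hφ1], fun a => ?_⟩
  rw [antipode_mul_antidistrib, antipode_star hcomul hcounit_star hKac]
  simpa using hφpos (star (HopfAlgebra.antipode ℂ a))
end

section
/- Let G be a compact topological group, H a complex Hilbert space, and U a strongly continuous unitary representation of G on H (U is a group homomorphism from G into the unitary operators on H such that x ↦ U_x ξ is continuous for every ξ ∈ H). Let μ be a Borel probability measure on G and let ξ ∈ H. Then the Bochner integral ∫_G U_x ξ dμ(x) equals ξ if and only if U_x ξ = ξ for μ-almost every x ∈ G; since the stabilizer {x ∈ G : U_x ξ = ξ} is closed, this holds if and only if μ is concentrated on (equivalently, supported in) the stabilizer of ξ. -/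
/-!
Every `U x` is an isometry, so `x ↦ U x ξ` takes values in the closed ball of radius `‖ξ‖`.
A Hilbert space is strictly convex, and in a strictly convex space the mean of a function
bounded by `‖v‖` can only reach `v` when the function is a.e. constant, equal to `v`.
-/

open MeasureTheory

theorem ae_eq_of_integral_eq_of_norm_le {α E : Type*} [MeasurableSpace α]
    [NormedAddCommGroup E] [NormedSpace ℝ E] [CompleteSpace E] [StrictConvexSpace ℝ E]
    {μ : Measure α} [IsProbabilityMeasure μ] {f : α → E} {v : E}
    (h_le : ∀ᵐ x ∂μ, ‖f x‖ ≤ ‖v‖) (h_int : ∫ x, f x ∂μ = v) : ∀ᵐ x ∂μ, f x = v := by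
  rcases ae_eq_const_or_norm_integral_lt_of_norm_le_const h_le with h_const | h_lt
  · rwa [average_eq_integral, h_int] at h_const
  · simp [h_int] at h_lt

theorem integral_eq_iff_ae_eq_of_norm_le {α E : Type*} [MeasurableSpace α]
    [NormedAddCommGroup E] [NormedSpace ℝ E] [CompleteSpace E] [StrictConvexSpace ℝ E]
    {μ : Measure α} [IsProbabilityMeasure μ] {f : α → E} {v : E}
    (h_le : ∀ᵐ x ∂μ, ‖f x‖ ≤ ‖v‖) : ∫ x, f x ∂μ = v ↔ ∀ᵐ x ∂μ, f x = v :=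
  ⟨ae_eq_of_integral_eq_of_norm_le h_le, fun h => (integral_congr_ae h).trans (by simp)⟩

theorem stmt12_general
    (G : Type*) [TopologicalSpace G] [Group G]
    [MeasurableSpace G] [BorelSpace G]
    (H : Type*) [NormedAddCommGroup H] [InnerProductSpace ℂ H] [CompleteSpace H]
    (U : G →* (H →L[ℂ] H))
    (hUiso : ∀ (x : G) (v : H), ‖U x v‖ = ‖v‖)
    (hUcont : ∀ v : H, Continuous fun x : G => U x v)
    (μ : Measure G) [IsProbabilityMeasure μ] (ξ : H) :
    IsClosed {x : G | U x ξ = ξ} ∧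
    ((∫ x, U x ξ ∂μ) = ξ ↔ ∀ᵐ x ∂μ, U x ξ = ξ) ∧
    ((∫ x, U x ξ ∂μ) = ξ ↔ μ {x : G | U x ξ = ξ} = 1) := by
  have h_closed : IsClosed {x : G | U x ξ = ξ} := isClosed_eq (hUcont ξ) continuous_const
  -- supplies `StrictConvexSpace ℝ H`
  have : InnerProductSpaceable H := InnerProductSpace.toInnerProductSpaceable ℂ
  have h_ae : (∫ x, U x ξ ∂μ) = ξ ↔ ∀ᵐ x ∂μ, U x ξ = ξ :=
    integral_eq_iff_ae_eq_of_norm_le (.of_forall fun x => (hUiso x ξ).le)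
  refine ⟨h_closed, h_ae, h_ae.trans ?_⟩
  rw [ae_iff_measure_eq h_closed.measurableSet.nullMeasurableSet, measure_univ]

/-- For a strongly continuous unitary representation `U` of a compact group
`G` on a complex Hilbert space `H`, a Borel probability measure `μ` on `G`, and `ξ ∈ H`:
the stabilizer `{x : U x ξ = ξ}` is closed, and the Bochner integral `∫ U_x ξ dμ(x)` equals
`ξ` iff `U_x ξ = ξ` for `μ`-almost every `x`, iff `μ` gives full measure to the stabilizer. -/
theorem stmt12
    (G : Type*) [TopologicalSpace G] [Group G] [IsTopologicalGroup G] [CompactSpace G]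
    [MeasurableSpace G] [BorelSpace G]
    (H : Type*) [NormedAddCommGroup H] [InnerProductSpace ℂ H] [CompleteSpace H]
    (U : G →* (H →L[ℂ] H))
    (hUiso : ∀ (x : G) (v : H), ‖U x v‖ = ‖v‖)
    (hUcont : ∀ v : H, Continuous fun x : G => U x v)
    (μ : Measure G) [IsProbabilityMeasure μ] (ξ : H) :
    IsClosed {x : G | U x ξ = ξ} ∧
    ((∫ x, U x ξ ∂μ) = ξ ↔ ∀ᵐ x ∂μ, U x ξ = ξ) ∧
    ((∫ x, U x ξ ∂μ) = ξ ↔ μ {x : G | U x ξ = ξ} = 1) :=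
  stmt12_general G H U hUiso hUcont μ ξ
end

section
/- Let A be a unital C*-algebra, d ≥ 1, and let u : Fin d → Fin d → A satisfy the column-isometry relation Σ_i (u i j)★ · (u i l) = (if j = l then 1 else 0) for all j, l. Let φ : A → ℂ be a positive unital linear functional (φ(1) = 1 and φ(a★a) ≥ 0 for all a), and let ξ ∈ ℂ^d. Then the following are equivalent: (i) Σ_j φ(u i j) · ξ_j = ξ_i for every i (the numerical matrix (φ(u i j)) fixes ξ); (ii) Σ_{i,j} φ(u i j) · ξ_j · conj(ξ_i) = ‖ξ‖². -/
/-!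
Cauchy–Schwarz for the GNS inner product of `φ` gives `|φ b|² ≤ φ (b⋆ b)`. Applied to
`bᵢ = Σⱼ uᵢⱼ ξⱼ` and summed with the column-isometry relation, it shows that the scalar matrix
`M = (φ uᵢⱼ)` is a contraction of `ℓ²`. Since `‖Mξ‖ ≤ ‖ξ‖`, the identity
`‖ξ - Mξ‖² = ‖ξ‖² - 2 Re ⟪ξ, Mξ⟫ + ‖Mξ‖²` shows that `⟪ξ, Mξ⟫ = ‖ξ‖²` forces `Mξ = ξ`.
-/
open scoped ComplexOrder InnerProductSpace Matrix

theorem inner_eq_norm_sq_iff_eq_of_norm_le {𝕜 E : Type*} [RCLike 𝕜] [NormedAddCommGroup E]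
    [InnerProductSpace 𝕜 E] {x y : E} (hyx : ‖y‖ ≤ ‖x‖) :
    ⟪x, y⟫_𝕜 = (‖x‖ : 𝕜) ^ 2 ↔ y = x := by
  refine ⟨fun h => ?_, fun h => h ▸ inner_self_eq_norm_sq_to_K y⟩
  have hre : RCLike.re ⟪x, y⟫_𝕜 = ‖x‖ ^ 2 := by rw [h]; norm_cast
  have hsq : ‖x - y‖ ^ 2 ≤ 0 := by
    rw [norm_sub_sq (𝕜 := 𝕜), hre]
    nlinarith [norm_nonneg y]
  exact (norm_sub_eq_zero_iff.mp (pow_eq_zero_iff two_ne_zero |>.mp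
    (le_antisymm hsq (by positivity)))).symm

namespace PositiveLinearMap

variable {A : Type*} [CStarAlgebra A] [PartialOrder A] [StarOrderedRing A]

theorem norm_apply_sq_le (f : A →ₚ[ℂ] ℂ) (b : A) :
    ‖f b‖ ^ 2 ≤ (f 1).re * (f (star b * b)).re := by
  have hcs := norm_inner_le_norm (𝕜 := ℂ) (f.toPreGNS 1) (f.toPreGNS b)
  rw [preGNS_inner_def] at hcs
  have h1 := f.preGNS_norm_sq (f.toPreGNS 1)
  have h2 := f.preGNS_norm_sq (f.toPreGNS b)
  simp only [ofPreGNS_toPreGNS, star_one, one_mul] at hcs h1 h2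
  rw [← h1, ← h2]
  norm_cast
  simpa only [mul_pow] using pow_le_pow_left₀ (norm_nonneg _) hcs 2

variable {ι κ : Type*} [Fintype ι] [Fintype κ] [DecidableEq κ]

theorem norm_toLp_map_mulVec_le (f : A →ₚ[ℂ] ℂ) (hf : f 1 = 1) {u : Matrix ι κ A}
    (hu : uᴴ * u = 1) (ξ : EuclideanSpace ℂ κ) :
    ‖(WithLp.toLp 2 (u.map f *ᵥ ξ.ofLp) : EuclideanSpace ℂ ι)‖ ≤ ‖ξ‖ := by
  set c : κ → A := fun j => algebraMap ℂ A (ξ j)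
  have hmap : u.map f *ᵥ ξ.ofLp = fun i => f ((u *ᵥ c) i) := by
    ext i
    simp [Matrix.mulVec, dotProduct, c, Algebra.algebraMap_eq_smul_one, mul_comm]
  rw [← sq_le_sq₀ (norm_nonneg _) (norm_nonneg _)]
  calc _ = ∑ i, ‖f ((u *ᵥ c) i)‖ ^ 2 := by simp [EuclideanSpace.norm_sq_eq, hmap]
    _ ≤ ∑ i, (f (star ((u *ᵥ c) i) * (u *ᵥ c) i)).re :=
      Finset.sum_le_sum fun i _ => by simpa [hf] using f.norm_apply_sq_le _
    _ = (f (star (u *ᵥ c) ⬝ᵥ (u *ᵥ c))).re := by simp [dotProduct, map_sum]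
    _ = (f (star c ⬝ᵥ c)).re := by
      rw [Matrix.star_mulVec, ← Matrix.dotProduct_mulVec, Matrix.mulVec_mulVec, hu,
        Matrix.one_mulVec]
    _ = ‖ξ‖ ^ 2 := by
      simp [dotProduct, c, map_sum, Algebra.algebraMap_eq_smul_one, hf, EuclideanSpace.norm_sq_eq,
        Complex.sq_norm, Complex.normSq_apply]

end PositiveLinearMap

theorem stmt14_general
    (A : Type*) [CStarAlgebra A]
    (d : ℕ) (u : Fin d → Fin d → A)
    (hcol : ∀ j l, ∑ i, star (u i j) * u i l = if j = l then 1 else 0)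
    (φ : A →ₗ[ℂ] ℂ) (hφ1 : φ 1 = 1) (hφpos : ∀ a : A, 0 ≤ φ (star a * a))
    (ξ : EuclideanSpace ℂ (Fin d)) :
    (∀ i, ∑ j, φ (u i j) * ξ j = ξ i) ↔
      ∑ i, ∑ j, φ (u i j) * ξ j * starRingEnd ℂ (ξ i) = (‖ξ‖ : ℂ) ^ 2 := by
  -- In the spectral order the nonnegative elements are exactly the `star b * b`.
  let := CStarAlgebra.spectralOrder A
  have := CStarAlgebra.spectralOrderedRing A
  let f : A →ₚ[ℂ] ℂ := .mk₀ φ fun a ha => by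
    obtain ⟨b, rfl⟩ := CStarAlgebra.nonneg_iff_eq_star_mul_self.mp ha
    exact hφpos b
  have hu : (Matrix.of u)ᴴ * Matrix.of u = 1 := by
    ext j l
    simpa [Matrix.mul_apply, Matrix.one_apply] using hcol j l
  have hf : ⇑f = φ := rfl
  set M := (Matrix.of u).map f
  have hinner : ⟪ξ, (WithLp.toLp 2 (M *ᵥ ξ.ofLp) : EuclideanSpace ℂ (Fin d))⟫_ℂ =
      ∑ i, ∑ j, φ (u i j) * ξ j * starRingEnd ℂ (ξ i) := by
    simp [PiLp.inner_apply, Matrix.mulVec, dotProduct, Finset.sum_mul, M, hf]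
  rw [← hinner, ← RCLike.ofReal_eq_complex_ofReal,
    inner_eq_norm_sq_iff_eq_of_norm_le (f.norm_toLp_map_mulVec_le hφ1 hu ξ)]
  simp [WithLp.ext_iff, funext_iff, Matrix.mulVec, dotProduct, hf]

/-- Let `A` be a unital C*-algebra, `u : Fin d → Fin d → A` satisfying the
column isometry relation `Σ_i (u i j)★ (u i l) = δ_{jl}`, `φ` a positive unital linear
functional on `A` and `ξ ∈ ℂ^d`.  Then the numerical matrix `(φ(u i j))` fixes `ξ` if and only
if `Σ_{i,j} φ(u i j) ξ_j conj(ξ_i) = ‖ξ‖²`. -/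
theorem stmt14
    (A : Type*) [CStarAlgebra A]
    (d : ℕ) (hd : 1 ≤ d) (u : Fin d → Fin d → A)
    (hcol : ∀ j l, ∑ i, star (u i j) * u i l = if j = l then 1 else 0)
    (φ : A →ₗ[ℂ] ℂ) (hφ1 : φ 1 = 1) (hφpos : ∀ a : A, 0 ≤ φ (star a * a))
    (ξ : EuclideanSpace ℂ (Fin d)) :
    (∀ i, ∑ j, φ (u i j) * ξ j = ξ i) ↔
      ∑ i, ∑ j, φ (u i j) * ξ j * starRingEnd ℂ (ξ i) = (‖ξ‖ : ℂ) ^ 2 :=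
  stmt14_general A d u hcol φ hφ1 hφpos ξ
end

section
/- Let A be a Hopf ∗-algebra over ℂ (Hopf algebra with comultiplication Δ, counit ε, antipode S; star-ring structure with Δ(a★) = (★ ⊗ ★)(Δ a)), with the Kac condition S ∘ S = id. Let h : A → ℂ be an algebraic Haar state: h(1) = 1; (id ⊗ h)(Δ a) = h(a)·1 and (h ⊗ id)(Δ a) = h(a)·1 for all a; h(a★) = conj(h(a)); and h nondegenerate (if h(b★ c) = 0 for all b ∈ A then c = 0). Let u : Fin d → Fin d → A be a unitary d-dimensional matrix corepresentation: Δ(u i j) = Σ_k (u i k) ⊗ (u k j), Σ_k (u k i)★ (u k j) = δ_{ij}·1, Σ_k (u i k)(u j k)★ = δ_{ij}·1. Let α : M_d(ℂ) → M_d(ℂ) ⊗ A be the conjugation coaction α(T)_{ij} = Σ_{k,l} T_{kl} · (u i k)(u j l)★, and let P ∈ M_d(ℂ) be an orthogonal projection (P = P★ = P²). Define the Berezin symbol σ : M_d(ℂ) → A by σ_T = (tr ⊗ id)((P ⊗ 1)·α(T)) (tr the unnormalized trace), the Berezin adjoint σ̆ : A → M_d(ℂ) by σ̆_a = d · (id ⊗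 h)( ((id ⊗ S)(α(P))) · (1 ⊗ a) ), and the functional h_P : A → ℂ by h_P(x) = d · h(σ_P · x). Then for every a ∈ A one has σ(σ̆_a) = (h_P ⊗ id)(Δ a). -/
/-!
Both sides are expanded along the Kronecker corepresentation `w = u ⊗ ū`, whose entries
`w_{(i,j),(k,l)} = u_{ik} u_{jl}★` are the matrix coefficients of `α`. The Kac condition
`S² = id` turns the antipode identity `S(w) w = 1` into `Σ_K S(w_{KJ}) w_{IK} = δ_{IJ}`, so that
`w_{IJ} ⊗ 1 = Σ_K (1 ⊗ S(w_{KJ})) Δ(w_{IK})`; left invariance of `h` then gives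
`(h ⊗ id)((w_{IJ} ⊗ 1) Δa) = Σ_K h(w_{IK} a) S(w_{KJ})`. Unitarity gives
`S(u_{ij}) = u_{ji}★`, hence `S(w_{JK}) = w_{K̄J̄}` with `(i,j)‾ = (j,i)`, and the triple sum
obtained for `(h_P ⊗ id)(Δa)` is a reindexing of the expansion of `σ(σ̆_a)`.
-/

open scoped TensorProduct Matrix Kronecker
open Coalgebra HopfAlgebra

section Slice

variable {R A : Type*} [CommSemiring R] [Semiring A] [Algebra R A]

theorem lid_rTensor_one_tmul_mul (φ : A →ₗ[R] R) (y : A) (t : A ⊗[R] A) :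
    TensorProduct.lid R A (φ.rTensor A ((1 ⊗ₜ y) * t)) =
      y * TensorProduct.lid R A (φ.rTensor A t) := by
  induction t using TensorProduct.induction_on with
  | zero => simp
  | tmul x z => simp
  | add s t hs ht => simp only [mul_add, map_add, hs, ht]

theorem lid_rTensor_comp_mulLeft (φ : A →ₗ[R] R) (x : A) (t : A ⊗[R] A) :
    TensorProduct.lid R A ((φ ∘ₗ LinearMap.mulLeft R x).rTensor A t) =
      TensorProduct.lid R A (φ.rTensor A ((x ⊗ₜ 1) * t)) := by
  induction t using TensorProduct.induction_on with
  | zero => simp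
  | tmul y z => simp
  | add s t hs ht => simp only [mul_add, map_add, hs, ht]

end Slice

theorem Equiv.sum_sum_sum_comp_rotate {κ M : Type*} [Fintype κ] [AddCommMonoid M] (e : κ ≃ κ)
    (f : κ → κ → κ → M) :
    ∑ I, ∑ K, ∑ J, f (e K) (e J) (e I) = ∑ I, ∑ J, ∑ K, f I J K := by
  calc ∑ I, ∑ K, ∑ J, f (e K) (e J) (e I) = ∑ I, ∑ K, ∑ J, f K J I := by
        refine e.sum_comp (fun I => ∑ K, ∑ J, f (e K) (e J) I) |>.trans ?_
        refine Finset.sum_congr rfl fun I _ => ?_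
        refine e.sum_comp (fun K => ∑ J, f K (e J) I) |>.trans ?_
        exact Finset.sum_congr rfl fun K _ => e.sum_comp (fun J => f K J I)
    _ = ∑ I, ∑ J, ∑ K, f I J K := by
        rw [Finset.sum_comm]
        exact Finset.sum_congr rfl fun _ _ => Finset.sum_comm

structure IsMatrixCorep (R : Type*) {A ι : Type*} [CommSemiring R] [AddCommMonoid A]
    [Module R A] [Coalgebra R A] [Fintype ι] [DecidableEq ι] (v : Matrix ι ι A) : Prop where
  comul_apply : ∀ i j, comul (R := R) (v i j) = ∑ k, v i k ⊗ₜ[R] v k j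
  counit_apply : ∀ i j, counit (R := R) (v i j) = (1 : Matrix ι ι R) i j

namespace IsMatrixCorep

variable {R A ι κ : Type*} [CommSemiring R] [Fintype ι] [DecidableEq ι] [Fintype κ]
  [DecidableEq κ]

section Bialgebra

variable [Semiring A] [Bialgebra R A]

theorem of_mul_eq_one {v v' : Matrix ι ι A}
    (hcomul : ∀ i j, comul (R := R) (v i j) = ∑ k, v i k ⊗ₜ[R] v k j) (hv : v * v' = 1) :
    IsMatrixCorep R v := by
  refine ⟨hcomul, fun i j => ?_⟩
  set E : Matrix ι ι A := v.map fun x => algebraMap R A (counit x)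
  have hEv : E * v = v := by
    ext i j
    simpa [E, Matrix.mul_apply, hcomul, Algebra.algebraMap_eq_smul_one, smul_mul_assoc]
      using congr(TensorProduct.lid R A $(rTensor_counit_comul (R := R) (v i j)))
  have hE : E = 1 := by rw [← hv, ← hEv, Matrix.mul_assoc, hv, Matrix.mul_one]
  apply Bialgebra.algebraMap_injective (R := R) (A := A)
  rw [← Matrix.map_apply (f := algebraMap R A), Matrix.map_one _ (map_zero _) (map_one _), ← hE]
  rfl

theorem kronecker {v : Matrix ι ι A} {w : Matrix κ κ A} (hv : IsMatrixCorep R v)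
    (hw : IsMatrixCorep R w) : IsMatrixCorep R (v ⊗ₖ w) where
  comul_apply I J := by
    simp only [Matrix.kroneckerMap_apply, Bialgebra.comul_mul, hv.comul_apply, hw.comul_apply,
      Finset.sum_mul_sum, Algebra.TensorProduct.tmul_mul_tmul, Fintype.sum_prod_type]
  counit_apply I J := by
    rw [Matrix.kronecker_apply, Bialgebra.counit_mul, hv.counit_apply, hw.counit_apply,
      ← Matrix.kronecker_apply, Matrix.one_kronecker_one]

end Bialgebra

section HopfAlgebra

variable [Semiring A] [HopfAlgebra R A] {v : Matrix ι ι A}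

theorem map_antipode_mul_self (hv : IsMatrixCorep R v) : v.map (antipode R) * v = 1 := by
  ext i j
  have := mul_antipode_rTensor_comul_apply (R := R) (v i j)
  simp only [hv.comul_apply, map_sum, LinearMap.rTensor_tmul, LinearMap.mul'_apply,
    hv.counit_apply] at this
  rw [Matrix.mul_apply]
  simp only [Matrix.map_apply, this]
  rw [← Matrix.map_apply (f := algebraMap R A), Matrix.map_one _ (map_zero _) (map_one _)]

theorem map_antipode_eq_of_mul_eq_one (hv : IsMatrixCorep R v) {v' : Matrix ι ι A}
    (hv' : v * v' = 1) : v.map (antipode R) = v' := by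
  rw [← Matrix.mul_one (v.map _), ← hv', ← Matrix.mul_assoc, hv.map_antipode_mul_self,
    Matrix.one_mul]

theorem sum_antipode_mul_of_involutive (hv : IsMatrixCorep R v)
    (hS : Function.Involutive (antipode R (A := A))) (i j : ι) :
    ∑ k, antipode R (v k j) * v i k = (1 : Matrix ι ι A) i j := by
  have := congr(antipode R ($(hv.map_antipode_mul_self) i j))
  rw [Matrix.mul_apply, map_sum, ← Matrix.map_apply (f := antipode R),
    Matrix.map_one _ (map_zero _) antipode_one] at this
  simpa only [Matrix.map_apply, antipode_mul_antidistrib, hS _] using this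

theorem tmul_one_eq_sum_one_tmul_antipode_mul_comul (hv : IsMatrixCorep R v)
    (hS : Function.Involutive (antipode R (A := A))) (i j : ι) :
    v i j ⊗ₜ[R] (1 : A) = ∑ k, (1 ⊗ₜ antipode R (v k j)) * comul (R := R) (v i k) := by
  calc v i j ⊗ₜ[R] (1 : A) = ∑ l, v i l ⊗ₜ[R] (1 : Matrix ι ι A) l j := by
        simp [Matrix.one_apply, TensorProduct.tmul_ite]
    _ = ∑ l, v i l ⊗ₜ[R] ∑ k, antipode R (v k j) * v l k := by
        simp only [hv.sum_antipode_mul_of_involutive hS]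
    _ = ∑ k, (1 ⊗ₜ antipode R (v k j)) * comul (R := R) (v i k) := by
        simp only [hv.comul_apply, Finset.mul_sum, Algebra.TensorProduct.tmul_mul_tmul, one_mul,
          TensorProduct.tmul_sum]
        exact Finset.sum_comm

theorem lid_rTensor_tmul_one_mul_comul (hv : IsMatrixCorep R v)
    (hS : Function.Involutive (antipode R (A := A))) {φ : A →ₗ[R] R}
    (hφ : ∀ b, TensorProduct.lid R A (φ.rTensor A (comul b)) = φ b • 1) (a : A) (i j : ι) :
    TensorProduct.lid R A (φ.rTensor A ((v i j ⊗ₜ 1) * comul a)) =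
      ∑ k, φ (v i k * a) • antipode R (v k j) := by
  rw [hv.tmul_one_eq_sum_one_tmul_antipode_mul_comul hS, Finset.sum_mul, map_sum, map_sum]
  refine Finset.sum_congr rfl fun k _ => ?_
  rw [mul_assoc, ← Bialgebra.comul_mul, lid_rTensor_one_tmul_mul, hφ, mul_smul_comm, mul_one]

end HopfAlgebra

section StarRing

variable [Semiring A] [StarRing A] [HopfAlgebra R A] {u : Matrix ι ι A}

theorem antipode_apply_of_mul_conjTranspose_eq_one (hu : IsMatrixCorep R u) (hunit : u * uᴴ = 1)
    (i j : ι) : antipode R (u i j) = star (u j i) :=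
  congrFun₂ (hu.map_antipode_eq_of_mul_eq_one hunit) i j

theorem map_star (hu : IsMatrixCorep R u) (hunit : u * uᴴ = 1)
    (hcomul : ∀ i j, comul (R := R) (star (u i j)) = ∑ k, star (u i k) ⊗ₜ[R] star (u k j)) :
    IsMatrixCorep R (u.map star) where
  comul_apply := hcomul
  counit_apply i j := by
    rw [Matrix.map_apply, ← hu.antipode_apply_of_mul_conjTranspose_eq_one hunit, counit_antipode,
      hu.counit_apply, ← Matrix.transpose_apply (1 : Matrix ι ι R), Matrix.transpose_one]

theorem antipode_kronecker_map_star (hu : IsMatrixCorep R u) (hunit : u * uᴴ = 1)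
    (hS : Function.Involutive (antipode R (A := A))) (J K : ι × ι) :
    antipode R ((u ⊗ₖ u.map star) J K) = (u ⊗ₖ u.map star) K.swap J.swap := by
  simp only [Matrix.kroneckerMap_apply, Matrix.map_apply, Prod.fst_swap, Prod.snd_swap,
    antipode_mul_antidistrib, ← hu.antipode_apply_of_mul_conjTranspose_eq_one hunit, hS _]

end StarRing

end IsMatrixCorep

section Berezin

variable {R A ι : Type*} [CommSemiring R] [Semiring A] [StarRing A] [HopfAlgebra R A]
  [Fintype ι]

def conjCoaction (u : Matrix ι ι A) (T : Matrix ι ι R) : Matrix ι ι A :=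
  Matrix.of fun i j => ∑ k, ∑ l, T k l • (u i k * star (u j l))

def berezinSymbol (u : Matrix ι ι A) (P T : Matrix ι ι R) : A :=
  ∑ i, ∑ k, P i k • conjCoaction u T k i

def berezinAdjoint (u : Matrix ι ι A) (P : Matrix ι ι R) (φ : A →ₗ[R] R) (a : A) :
    Matrix ι ι R :=
  Matrix.of fun i j => Fintype.card ι * φ (antipode R (conjCoaction u P i j) * a)

theorem conjCoaction_apply_eq_sum_kronecker (u : Matrix ι ι A) (T : Matrix ι ι R) (i j : ι) :
    conjCoaction u T i j = ∑ K : ι × ι, T K.1 K.2 • (u ⊗ₖ u.map star) (i, j) K := by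
  rw [conjCoaction, Matrix.of_apply, Fintype.sum_prod_type]
  rfl

theorem berezinSymbol_eq_sum_kronecker (u : Matrix ι ι A) (P T : Matrix ι ι R) :
    berezinSymbol u P T =
      ∑ I : ι × ι, ∑ J : ι × ι,
        (P I.2 I.1 * T J.1 J.2) • (u ⊗ₖ u.map star) I J := by
  simp only [berezinSymbol, conjCoaction_apply_eq_sum_kronecker, Finset.smul_sum, smul_smul]
  rw [Finset.sum_comm, Fintype.sum_prod_type]

variable [DecidableEq ι]

theorem IsMatrixCorep.berezinAdjoint_apply_eq_sum_kronecker {u : Matrix ι ι A}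
    (hu : IsMatrixCorep R u) (hunit : u * uᴴ = 1)
    (hS : Function.Involutive (antipode R (A := A))) (P : Matrix ι ι R) (φ : A →ₗ[R] R) (a : A)
    (J : ι × ι) :
    berezinAdjoint u P φ a J.1 J.2 =
      Fintype.card ι *
        ∑ K : ι × ι, P K.1 K.2 * φ ((u ⊗ₖ u.map star) K.swap J.swap * a) := by
  simp only [berezinAdjoint, Matrix.of_apply, conjCoaction_apply_eq_sum_kronecker, map_sum,
    map_smul, Finset.sum_mul, smul_mul_assoc, hu.antipode_kronecker_map_star hunit hS,
    smul_eq_mul]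

theorem IsMatrixCorep.berezinSymbol_berezinAdjoint {u : Matrix ι ι A} (hu : IsMatrixCorep R u)
    (hunit : u * uᴴ = 1)
    (hcomul_star : ∀ i j, comul (R := R) (star (u i j)) = ∑ k, star (u i k) ⊗ₜ[R] star (u k j))
    (hS : Function.Involutive (antipode R (A := A))) {φ : A →ₗ[R] R}
    (hφ : ∀ b, TensorProduct.lid R A (φ.rTensor A (comul b)) = φ b • 1) (P : Matrix ι ι R)
    (a : A) :
    berezinSymbol u P (berezinAdjoint u P φ a) =
      TensorProduct.lid R A
        ((((Fintype.card ι : R) • φ) ∘ₗ LinearMap.mulLeft R (berezinSymbol u P P)).rTensor A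
          (comul a)) := by
  set w := u ⊗ₖ u.map star
  have hw : IsMatrixCorep R w := hu.kronecker (hu.map_star hunit hcomul_star)
  have hSw : ∀ J K, antipode R (w J K) = w K.swap J.swap :=
    hu.antipode_kronecker_map_star hunit hS
  calc berezinSymbol u P (berezinAdjoint u P φ a)
      = (Fintype.card ι : R) • ∑ I : ι × ι, ∑ J : ι × ι, ∑ K : ι × ι,
          (P I.2 I.1 * P K.1 K.2 * φ (w K.swap J.swap * a)) • w I J := by
        simp only [berezinSymbol_eq_sum_kronecker,
          hu.berezinAdjoint_apply_eq_sum_kronecker hunit hS, Finset.mul_sum, Finset.sum_smul,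
          Finset.smul_sum, smul_smul]
        congr! 4 with I _ J _ K _
        ring
    _ = (Fintype.card ι : R) • ∑ I : ι × ι, ∑ K : ι × ι, ∑ J : ι × ι,
          (P K.1 K.2 * P I.2 I.1 * φ (w I J * a)) • w K.swap J.swap := by
        have := Equiv.sum_sum_sum_comp_rotate (Equiv.prodComm ι ι)
          fun I J K => (P I.2 I.1 * P K.1 K.2 * φ (w K.swap J.swap * a)) • w I J
        simp only [Equiv.prodComm_apply, Prod.swap_swap, Prod.fst_swap, Prod.snd_swap] at this
        rw [this]
    _ = (Fintype.card ι : R) • ∑ I : ι × ι, ∑ K : ι × ι, (P I.2 I.1 * P K.1 K.2) •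
          TensorProduct.lid R A (φ.rTensor A ((w I K ⊗ₜ 1) * comul a)) := by
        simp only [hw.lid_rTensor_tmul_one_mul_comul hS hφ, hSw, Finset.smul_sum, smul_smul]
        congr! 4 with I _ K _ J _
        ring
    _ = _ := by
        rw [lid_rTensor_comp_mulLeft, LinearMap.rTensor_smul, berezinSymbol_eq_sum_kronecker]
        simp only [TensorProduct.sum_tmul, ← TensorProduct.smul_tmul', Finset.sum_mul,
          smul_mul_assoc, map_sum, map_smul, LinearMap.smul_apply, Finset.smul_sum]
        exact Finset.sum_congr rfl fun I _ => Finset.sum_congr rfl fun K _ => smul_comm _ _ _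

end Berezin

theorem stmt15_general
    (A : Type*) [Ring A] [HopfAlgebra ℂ A] [StarRing A]
    -- ∗-compatibility of the comultiplication, `Δ(a★) = (★ ⊗ ★)(Δ a)`,
    -- where `(★ ⊗ ★)` is encoded by the additive map `sT`
    (sT : A ⊗[ℂ] A → A ⊗[ℂ] A)
    (hsT_add : ∀ v w : A ⊗[ℂ] A, sT (v + w) = sT v + sT w)
    (hsT_tmul : ∀ x y : A, sT (x ⊗ₜ[ℂ] y) = star x ⊗ₜ[ℂ] star y)
    (hcomul_star : ∀ a : A,
      Coalgebra.comul (R := ℂ) (star a) = sT (Coalgebra.comul (R := ℂ) a))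
    -- Kac condition `S ∘ S = id`
    (hKac : ∀ a : A, HopfAlgebra.antipode (R := ℂ) (HopfAlgebra.antipode (R := ℂ) a) = a)
    -- the algebraic Haar state
    (h : A →ₗ[ℂ] ℂ)
    (hinvL : ∀ a : A,
      (TensorProduct.lid ℂ A) ((LinearMap.rTensor A h) (Coalgebra.comul (R := ℂ) a)) =
        h a • (1 : A))
    -- the unitary matrix corepresentation
    (d : ℕ) (u : Fin d → Fin d → A)
    (hΔ : ∀ i j, Coalgebra.comul (R := ℂ) (u i j) = ∑ k, u i k ⊗ₜ[ℂ] u k j)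
    (hrow : ∀ i j, ∑ k, u i k * star (u j k) = if i = j then 1 else 0)
    -- the conjugation coaction, entrywise
    (α : Matrix (Fin d) (Fin d) ℂ → Matrix (Fin d) (Fin d) A)
    (hα : ∀ (T : Matrix (Fin d) (Fin d) ℂ) (i j : Fin d),
      α T i j = ∑ k, ∑ l, T k l • (u i k * star (u j l)))
    -- the orthogonal projection
    (P : Matrix (Fin d) (Fin d) ℂ)
    -- the Berezin symbol `σ_T = (tr ⊗ id)((P ⊗ 1) α(T))`
    (σ : Matrix (Fin d) (Fin d) ℂ → A)
    (hσ : ∀ T : Matrix (Fin d) (Fin d) ℂ, σ T = ∑ i, ∑ k, P i k • α T k i)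
    -- the Berezin adjoint `σ̆_a = d (id ⊗ h)(((id ⊗ S)(α P)) (1 ⊗ a))`
    (σbr : A → Matrix (Fin d) (Fin d) ℂ)
    (hσbr : ∀ (a : A) (i j : Fin d),
      σbr a i j = (d : ℂ) * h (HopfAlgebra.antipode (R := ℂ) (α P i j) * a))
    -- the functional `h_P(x) = d · h(σ_P x)`
    (hP : A →ₗ[ℂ] ℂ) (hhP : ∀ x : A, hP x = (d : ℂ) * h (σ P * x)) :
    ∀ a : A,
      σ (σbr a) =
        (TensorProduct.lid ℂ A) ((LinearMap.rTensor A hP) (Coalgebra.comul (R := ℂ) a)) := by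
  intro a
  set U := Matrix.of u
  have hunit : U * Uᴴ = 1 := by
    ext i j
    simpa [U, Matrix.mul_apply, Matrix.one_apply] using hrow i j
  have hu : IsMatrixCorep ℂ U := .of_mul_eq_one hΔ hunit
  have hcomul_star_u : ∀ i j, Coalgebra.comul (R := ℂ) (star (u i j)) =
      ∑ k, star (u i k) ⊗ₜ[ℂ] star (u k j) := fun i j => by
    rw [hcomul_star, hΔ, ← AddMonoidHom.mk'_apply sT hsT_add, map_sum]
    simp only [AddMonoidHom.mk'_apply, hsT_tmul]
  have hαU : α = conjCoaction U := funext fun T => Matrix.ext (hα T)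
  have hσU : σ = berezinSymbol U P := funext fun T => by rw [hσ, hαU, berezinSymbol]
  have hσbrU : σbr = berezinAdjoint U P h := funext fun b => Matrix.ext fun i j => by
    rw [hσbr, hαU, berezinAdjoint, Matrix.of_apply, Fintype.card_fin]
  have hhPU : hP = (((Fintype.card (Fin d) : ℂ) • h) ∘ₗ LinearMap.mulLeft ℂ (σ P)) := by
    ext x
    simp [hhP]
  rw [hσbrU, hhPU, hσU]
  exact hu.berezinSymbol_berezinAdjoint hunit hcomul_star_u hKac hinvL P a

/-- For a Kac-type Hopf ∗-algebra `A` over ℂ with an algebraic Haar state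
`h`, a unitary matrix corepresentation `u` of dimension `d`, the conjugation coaction
`α(T)_{ij} = Σ_{k,l} T_{kl} · u_{ik} (u_{jl})★` (with `M_d(ℂ) ⊗ A` identified with `M_d(A)`),
and an orthogonal projection `P`, the Berezin symbol `σ_T = (tr ⊗ id)((P ⊗ 1) α(T))`, the
Berezin adjoint `σ̆_a = d (id ⊗ h)(((id ⊗ S)(α P)) (1 ⊗ a))` and the state
`h_P(x) = d · h(σ_P x)` satisfy the Berezin-transform formula
`σ(σ̆_a) = (h_P ⊗ id)(Δ a)` for every `a ∈ A`. -/
theorem stmt15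
    (A : Type*) [Ring A] [HopfAlgebra ℂ A] [StarRing A]
    -- ∗-compatibility of the comultiplication, `Δ(a★) = (★ ⊗ ★)(Δ a)`,
    -- where `(★ ⊗ ★)` is encoded by the additive map `sT`
    (sT : A ⊗[ℂ] A → A ⊗[ℂ] A)
    (hsT_add : ∀ v w : A ⊗[ℂ] A, sT (v + w) = sT v + sT w)
    (hsT_tmul : ∀ x y : A, sT (x ⊗ₜ[ℂ] y) = star x ⊗ₜ[ℂ] star y)
    (hcomul_star : ∀ a : A,
      Coalgebra.comul (R := ℂ) (star a) = sT (Coalgebra.comul (R := ℂ) a))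
    -- Kac condition `S ∘ S = id`
    (hKac : ∀ a : A, HopfAlgebra.antipode (R := ℂ) (HopfAlgebra.antipode (R := ℂ) a) = a)
    -- the algebraic Haar state
    (h : A →ₗ[ℂ] ℂ) (hh1 : h 1 = 1)
    (hinvR : ∀ a : A,
      (TensorProduct.rid ℂ A) ((LinearMap.lTensor A h) (Coalgebra.comul (R := ℂ) a)) =
        h a • (1 : A))
    (hinvL : ∀ a : A,
      (TensorProduct.lid ℂ A) ((LinearMap.rTensor A h) (Coalgebra.comul (R := ℂ) a)) =
        h a • (1 : A))
    (hstar : ∀ a : A, h (star a) = starRingEnd ℂ (h a))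
    (hnondeg : ∀ c : A, (∀ b : A, h (star b * c) = 0) → c = 0)
    -- the unitary matrix corepresentation
    (d : ℕ) (u : Fin d → Fin d → A)
    (hΔ : ∀ i j, Coalgebra.comul (R := ℂ) (u i j) = ∑ k, u i k ⊗ₜ[ℂ] u k j)
    (hcol : ∀ i j, ∑ k, star (u k i) * u k j = if i = j then 1 else 0)
    (hrow : ∀ i j, ∑ k, u i k * star (u j k) = if i = j then 1 else 0)
    -- the conjugation coaction, entrywise
    (α : Matrix (Fin d) (Fin d) ℂ → Matrix (Fin d) (Fin d) A)
    (hα : ∀ (T : Matrix (Fin d) (Fin d) ℂ) (i j : Fin d),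
      α T i j = ∑ k, ∑ l, T k l • (u i k * star (u j l)))
    -- the orthogonal projection
    (P : Matrix (Fin d) (Fin d) ℂ) (hP1 : P.conjTranspose = P) (hP2 : P * P = P)
    -- the Berezin symbol `σ_T = (tr ⊗ id)((P ⊗ 1) α(T))`
    (σ : Matrix (Fin d) (Fin d) ℂ → A)
    (hσ : ∀ T : Matrix (Fin d) (Fin d) ℂ, σ T = ∑ i, ∑ k, P i k • α T k i)
    -- the Berezin adjoint `σ̆_a = d (id ⊗ h)(((id ⊗ S)(α P)) (1 ⊗ a))`
    (σbr : A → Matrix (Fin d) (Fin d) ℂ)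
    (hσbr : ∀ (a : A) (i j : Fin d),
      σbr a i j = (d : ℂ) * h (HopfAlgebra.antipode (R := ℂ) (α P i j) * a))
    -- the functional `h_P(x) = d · h(σ_P x)`
    (hP : A →ₗ[ℂ] ℂ) (hhP : ∀ x : A, hP x = (d : ℂ) * h (σ P * x)) :
    ∀ a : A,
      σ (σbr a) =
        (TensorProduct.lid ℂ A) ((LinearMap.rTensor A hP) (Coalgebra.comul (R := ℂ) a)) :=
  stmt15_general A sT hsT_add hsT_tmul hcomul_star hKac h hinvL d u hΔ hrow α hα P σ hσ σbr hσbr hP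
    hhP
end

section
/- Let A be a unital C*-algebra and h : A → ℂ a positive unital tracial linear functional: h(1) = 1, h(a★a) ≥ 0 for all a, and h(ab) = h(ba) for all a, b. Let γ ∈ (0,1), let s ∈ A with 0 ≤ s ≤ 1, and let p, q ∈ A be self-adjoint idempotents (p = p★ = p², q = q★ = q²) that commute with s and satisfy s·(1−q) ≤ (1−γ)·(1−q), s·p ≥ (1−γ/2)·p, and h(p) > 0. Then for every a ∈ A and every n ∈ ℕ: |h(sⁿ·(1−q)·a)| ≤ ‖a‖·(1−γ)ⁿ, h(sⁿ) ≥ (1−γ/2)ⁿ·h(p) > 0, and hence |h(sⁿ·(1−q)·a)| / h(sⁿ) ≤ (‖a‖ / h(p)) · ((1−γ)/(1−γ/2))ⁿ. -/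
/-!
Traciality makes `h (x * y) ≥ 0` for `x, y ≥ 0`: writing `x = c * c` with `c` self-adjoint,
`h (x * y) = h (c * y * c)`. Applied with `x = sⁿ`, this lets the order relations
`s(1−q) ≤ (1−γ)(1−q)` and `(1−γ/2)p ≤ sp` be iterated under `h`, giving
`h(sⁿ(1−q)) ≤ (1−γ)ⁿ` and `h(sⁿ) ≥ h(sⁿp) ≥ (1−γ/2)ⁿ h(p)`. The numerator is then controlled by
Cauchy–Schwarz in the GNS space of `h`: `|h(b a)| ≤ ‖a‖ h(b b⋆)^{1/2}` with `b = sⁿ(1−q)`, and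
`b b⋆ = s²ⁿ(1−q)`.
-/

open scoped ComplexOrder

namespace PositiveLinearMap

variable {A : Type*} [CStarAlgebra A] [PartialOrder A] [StarOrderedRing A]

noncomputable def ofMapStarMulSelfNonneg (f : A →ₗ[ℂ] ℂ) (hf : ∀ a, 0 ≤ f (star a * a)) :
    A →ₚ[ℂ] ℂ :=
  mk₀ f fun _ hx ↦ by
    obtain ⟨b, rfl⟩ := CStarAlgebra.nonneg_iff_eq_star_mul_self.mp hx
    exact hf b

@[simp]
lemma ofMapStarMulSelfNonneg_apply (f : A →ₗ[ℂ] ℂ) (hf : ∀ a, 0 ≤ f (star a * a)) (x : A) :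
    ofMapStarMulSelfNonneg f hf x = f x := rfl

variable (f : A →ₚ[ℂ] ℂ)

lemma norm_map_mul_le (b a : A) :
    ‖f (b * a)‖ ≤ √(f (b * star b)).re * ‖a‖ * √(f 1).re := by
  have hL : ‖f.leftMulMapPreGNS a‖ ≤ ‖a‖ :=
    (LinearMap.mkContinuous_norm_le' _ _).trans_eq (max_eq_left (norm_nonneg a))
  calc ‖f (b * a)‖
      = ‖inner ℂ (f.toPreGNS (star b)) (f.leftMulMapPreGNS a (f.toPreGNS 1))‖ := by
        simp [preGNS_inner_def]
    _ ≤ ‖f.toPreGNS (star b)‖ * (‖a‖ * ‖f.toPreGNS 1‖) :=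
        (norm_inner_le_norm _ _).trans <| by
          gcongr; exact (f.leftMulMapPreGNS a).le_of_opNorm_le hL _
    _ = √(f (b * star b)).re * ‖a‖ * √(f 1).re := by
        simp [preGNS_norm_def, mul_assoc]

variable {f}

lemma map_mul_nonneg (htr : ∀ a b, f (a * b) = f (b * a)) {x y : A} (hx : 0 ≤ x) (hy : 0 ≤ y) :
    0 ≤ f (x * y) := by
  obtain ⟨c, hc, rfl⟩ := CStarAlgebra.nonneg_iff_exists_isSelfAdjoint_and_eq_mul_self.mp hx
  calc 0 ≤ f (c * y * c) := f.map_nonneg (hc.conjugate_nonneg hy)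
    _ = f (c * c * y) := by rw [htr, ← mul_assoc]

lemma map_pow_mul_le (htr : ∀ a b, f (a * b) = f (b * a)) {s e : A} {r : ℝ} (hs : 0 ≤ s)
    (hr : 0 ≤ r) (hse : s * e ≤ (r : ℂ) • e) (n : ℕ) : f (s ^ n * e) ≤ (r : ℂ) ^ n * f e := by
  induction n with
  | zero => simp
  | succ n ih =>
    have hstep : f (s ^ (n + 1) * e) ≤ r * f (s ^ n * e) := by
      have := map_mul_nonneg htr (CStarAlgebra.pow_nonneg hs n) (sub_nonneg.mpr hse)
      rwa [mul_sub, mul_smul_comm, ← mul_assoc, ← pow_succ, map_sub, map_smul, sub_nonneg] at this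
    calc f (s ^ (n + 1) * e) ≤ r * f (s ^ n * e) := hstep
      _ ≤ r * ((r : ℂ) ^ n * f e) := by gcongr
      _ = (r : ℂ) ^ (n + 1) * f e := by ring

lemma pow_mul_map_le (htr : ∀ a b, f (a * b) = f (b * a)) {s e : A} {r : ℝ} (hs : 0 ≤ s)
    (hr : 0 ≤ r) (hse : (r : ℂ) • e ≤ s * e) (n : ℕ) : (r : ℂ) ^ n * f e ≤ f (s ^ n * e) := by
  induction n with
  | zero => simp
  | succ n ih =>
    have hstep : r * f (s ^ n * e) ≤ f (s ^ (n + 1) * e) := by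
      have := map_mul_nonneg htr (CStarAlgebra.pow_nonneg hs n) (sub_nonneg.mpr hse)
      rwa [mul_sub, mul_smul_comm, ← mul_assoc, ← pow_succ, map_sub, map_smul, sub_nonneg] at this
    calc (r : ℂ) ^ (n + 1) * f e = r * ((r : ℂ) ^ n * f e) := by ring
      _ ≤ r * f (s ^ n * e) := by gcongr
      _ ≤ f (s ^ (n + 1) * e) := hstep

lemma norm_map_pow_mul_mul_le (htr : ∀ a b, f (a * b) = f (b * a)) {s e : A} {r : ℝ}
    (hs : 0 ≤ s) (hr : 0 ≤ r) (he : IsStarProjection e) (hes : Commute e s)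
    (hse : s * e ≤ (r : ℂ) • e) (a : A) (n : ℕ) :
    ‖f (s ^ n * e * a)‖ ≤ ‖a‖ * r ^ n * (f 1).re := by
  have hf1 : 0 ≤ (f 1).re := (Complex.le_def.mp (f.map_nonneg zero_le_one)).1
  have hb : s ^ n * e * star (s ^ n * e) = s ^ (n + n) * e := by
    rw [star_mul, he.isSelfAdjoint.star_eq, ((IsSelfAdjoint.of_nonneg hs).pow n).star_eq,
      mul_assoc, ← mul_assoc e, he.isIdempotentElem.eq, (hes.pow_right n).eq, ← mul_assoc,
      ← pow_add]
  have hbound : (f (s ^ (n + n) * e)).re ≤ (r ^ n) ^ 2 * (f 1).re := by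
    have := calc f (s ^ (n + n) * e) ≤ (r : ℂ) ^ (n + n) * f e := map_pow_mul_le htr hs hr hse _
      _ ≤ (r : ℂ) ^ (n + n) * f 1 := by gcongr; exact he.le_one
    rw [← pow_mul, mul_two]
    simpa only [← Complex.ofReal_pow, Complex.re_ofReal_mul] using (Complex.le_def.mp this).1
  calc ‖f (s ^ n * e * a)‖ ≤ √(f (s ^ n * e * star (s ^ n * e))).re * ‖a‖ * √(f 1).re :=
        f.norm_map_mul_le _ a
    _ ≤ √((r ^ n) ^ 2 * (f 1).re) * ‖a‖ * √(f 1).re := by rw [hb]; gcongr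
    _ = ‖a‖ * r ^ n * (f 1).re := by
        rw [Real.sqrt_mul (by positivity), Real.sqrt_sq (by positivity)]
        linear_combination (‖a‖ * r ^ n) * Real.mul_self_sqrt hf1

lemma pow_mul_map_le_map_pow (htr : ∀ a b, f (a * b) = f (b * a)) {s p : A} {r : ℝ}
    (hs : 0 ≤ s) (hr : 0 ≤ r) (hp : p ≤ 1) (hsp : (r : ℂ) • p ≤ s * p) (n : ℕ) :
    (r : ℂ) ^ n * f p ≤ f (s ^ n) := by
  calc (r : ℂ) ^ n * f p ≤ f (s ^ n * p) := pow_mul_map_le htr hs hr hsp n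
    _ ≤ f (s ^ n) := by
      have := map_mul_nonneg htr (CStarAlgebra.pow_nonneg hs n) (sub_nonneg.mpr hp)
      rwa [mul_sub, mul_one, map_sub, sub_nonneg] at this

end PositiveLinearMap

theorem stmt16_general
    (A : Type*) [CStarAlgebra A] [PartialOrder A] [StarOrderedRing A]
    (h : A →ₗ[ℂ] ℂ) (hh1 : h 1 = 1)
    (hpos : ∀ a : A, 0 ≤ h (star a * a))
    (htr : ∀ a b : A, h (a * b) = h (b * a))
    (γ : ℝ) (hγ1 : γ < 1)
    (s : A) (hs0 : 0 ≤ s)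
    (p q : A)
    (hpsa : star p = p) (hpidem : p * p = p)
    (hqsa : star q = q) (hqidem : q * q = q)
    (hqcomm : q * s = s * q)
    (hsq : s * (1 - q) ≤ ((1 - γ : ℝ) : ℂ) • (1 - q))
    (hsp : ((1 - γ / 2 : ℝ) : ℂ) • p ≤ s * p)
    (hhp : 0 < h p) :
    ∀ (a : A) (n : ℕ),
      ‖h (s ^ n * (1 - q) * a)‖ ≤ ‖a‖ * (1 - γ) ^ n ∧
      ((1 - γ / 2) ^ n * (h p).re ≤ (h (s ^ n)).re ∧ 0 < (h (s ^ n)).re) ∧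
      ‖h (s ^ n * (1 - q) * a)‖ / (h (s ^ n)).re ≤
        (‖a‖ / (h p).re) * ((1 - γ) / (1 - γ / 2)) ^ n := by
  let f := PositiveLinearMap.ofMapStarMulSelfNonneg h hpos
  have hp : IsStarProjection p := ⟨hpidem, hpsa⟩
  have hq : IsStarProjection (1 - q) := IsStarProjection.one_sub ⟨hqidem, hqsa⟩
  intro a n
  have hnum : ‖h (s ^ n * (1 - q) * a)‖ ≤ ‖a‖ * (1 - γ) ^ n := by
    simpa [f, hh1] using f.norm_map_pow_mul_mul_le htr hs0 (by linarith) hq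
      ((Commute.one_left s).sub_left hqcomm) hsq a n
  have hden : (1 - γ / 2) ^ n * (h p).re ≤ (h (s ^ n)).re := by
    have := (Complex.le_def.mp (f.pow_mul_map_le_map_pow htr hs0 (by linarith) hp.le_one hsp n)).1
    rwa [← Complex.ofReal_pow, Complex.re_ofReal_mul] at this
  have hhp_re : 0 < (h p).re := (Complex.lt_def.mp hhp).1
  have hγ2 : 0 < 1 - γ / 2 := by linarith
  have hden_pos : 0 < (1 - γ / 2) ^ n * (h p).re := mul_pos (pow_pos hγ2 n) hhp_re
  refine ⟨hnum, ⟨hden, hden_pos.trans_le hden⟩, ?_⟩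
  calc ‖h (s ^ n * (1 - q) * a)‖ / (h (s ^ n)).re
      ≤ ‖a‖ * (1 - γ) ^ n / ((1 - γ / 2) ^ n * (h p).re) :=
        div_le_div₀ (by positivity) hnum hden_pos hden
    _ = ‖a‖ / (h p).re * ((1 - γ) / (1 - γ / 2)) ^ n := by
        rw [div_pow]; field_simp

/-- The concentration estimate: in a unital C*-algebra `A` with a positive
unital tracial functional `h`, given `γ ∈ (0,1)`, `0 ≤ s ≤ 1`, and commuting self-adjoint
idempotents `p, q` with `s(1−q) ≤ (1−γ)(1−q)`, `sp ≥ (1−γ/2)p` and `h(p) > 0`, one has for all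
`a ∈ A` and `n ∈ ℕ`: `|h(sⁿ(1−q)a)| ≤ ‖a‖(1−γ)ⁿ`, `h(sⁿ) ≥ (1−γ/2)ⁿ h(p) > 0`, and
`|h(sⁿ(1−q)a)|/h(sⁿ) ≤ (‖a‖/h(p))·((1−γ)/(1−γ/2))ⁿ`. -/
theorem stmt16
    (A : Type*) [CStarAlgebra A] [PartialOrder A] [StarOrderedRing A]
    (h : A →ₗ[ℂ] ℂ) (hh1 : h 1 = 1)
    (hpos : ∀ a : A, 0 ≤ h (star a * a))
    (htr : ∀ a b : A, h (a * b) = h (b * a))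
    (γ : ℝ) (hγ0 : 0 < γ) (hγ1 : γ < 1)
    (s : A) (hs0 : 0 ≤ s) (hs1 : s ≤ 1)
    (p q : A)
    (hpsa : star p = p) (hpidem : p * p = p)
    (hqsa : star q = q) (hqidem : q * q = q)
    (hpcomm : p * s = s * p) (hqcomm : q * s = s * q)
    (hsq : s * (1 - q) ≤ ((1 - γ : ℝ) : ℂ) • (1 - q))
    (hsp : ((1 - γ / 2 : ℝ) : ℂ) • p ≤ s * p)
    (hhp : 0 < h p) :
    ∀ (a : A) (n : ℕ),
      ‖h (s ^ n * (1 - q) * a)‖ ≤ ‖a‖ * (1 - γ) ^ n ∧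
      ((1 - γ / 2) ^ n * (h p).re ≤ (h (s ^ n)).re ∧ 0 < (h (s ^ n)).re) ∧
      ‖h (s ^ n * (1 - q) * a)‖ / (h (s ^ n)).re ≤
        (‖a‖ / (h p).re) * ((1 - γ) / (1 - γ / 2)) ^ n :=
  stmt16_general A h hh1 hpos htr γ hγ1 s hs0 p q hpsa hpidem hqsa hqidem hqcomm hsq hsp hhp
end

section
/- Let X be a compact Hausdorff topological space, x₀ ∈ X, and δ > 0. Let F be a subset of C(X, ℝ) that is totally bounded for the supremum norm and such that every g ∈ F satisfies g ≥ 0 and g(x₀) = 0. Then there exists a continuous function f : X → ℝ with f ≥ 0, f(x₀) ≤ δ, and g(x) ≤ f(x) for every g ∈ F and every x ∈ X. -/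
/-!
A finite `δ/2`-net `s ⊆ F` exists by total boundedness, and `f = ∑ g ∈ s, g + δ/2` works:
nonnegativity of the members of `s` makes each of them, hence each member of `F` up to `δ/2`,
lie below `f`, while `f x₀ = δ/2` because all of them vanish at `x₀`.
-/

open Finset

theorem ContinuousMap.exists_finset_subset_forall_le_add {X : Type*} [TopologicalSpace X]
    [CompactSpace X] {F : Set C(X, ℝ)} (hF : TotallyBounded F) {ε : ℝ} (hε : 0 < ε) :
    ∃ s : Finset C(X, ℝ), ↑s ⊆ F ∧ ∀ g ∈ F, ∃ g' ∈ s, ∀ x, g x ≤ g' x + ε := by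
  classical
  obtain ⟨t, htF, htfin, hcov⟩ := Metric.finite_approx_of_totallyBounded hF ε hε
  refine ⟨htfin.toFinset, by simpa using htF, fun g hg ↦ ?_⟩
  obtain ⟨g', hg't, hgg'⟩ := Set.mem_iUnion₂.mp (hcov hg)
  refine ⟨g', htfin.mem_toFinset.mpr hg't, fun x ↦ ?_⟩
  have hdist : dist (g x) (g' x) < ε :=
    (ContinuousMap.dist_apply_le_dist x).trans_lt (Metric.mem_ball.mp hgg')
  linarith [(abs_lt.mp (Real.dist_eq (g x) (g' x) ▸ hdist)).2]

theorem stmt17_general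
    (X : Type*) [TopologicalSpace X] [CompactSpace X]
    (x₀ : X) (δ : ℝ) (hδ : 0 < δ)
    (F : Set C(X, ℝ)) (hFtb : TotallyBounded F)
    (hFpos : ∀ g ∈ F, ∀ x, 0 ≤ g x) (hFzero : ∀ g ∈ F, g x₀ = 0) :
    ∃ f : C(X, ℝ), (∀ x, 0 ≤ f x) ∧ f x₀ ≤ δ ∧ ∀ g ∈ F, ∀ x, g x ≤ f x := by
  obtain ⟨s, hsF, hnet⟩ :=
    ContinuousMap.exists_finset_subset_forall_le_add hFtb (half_pos hδ)
  have hs_nonneg (x : X) : ∀ g ∈ s, 0 ≤ g x := fun g hg ↦ hFpos g (hsF hg) x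
  set f : C(X, ℝ) := ∑ g ∈ s, g + ContinuousMap.const X (δ / 2)
  have hf (x : X) : f x = ∑ g ∈ s, g x + δ / 2 := by simp [f]
  refine ⟨f, fun x ↦ ?_, ?_, fun g hg x ↦ ?_⟩
  · linarith [hf x, sum_nonneg (hs_nonneg x)]
  · linarith [hf x₀, sum_eq_zero fun g hg ↦ hFzero g (hsF hg)]
  · obtain ⟨g', hg's, hgg'⟩ := hnet g hg
    linarith [hf x, hgg' x, single_le_sum (hs_nonneg x) hg's]

/-- On a compact Hausdorff space `X`, given a point `x₀`, `δ > 0`, and a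
totally bounded family `F` of continuous nonnegative functions vanishing at `x₀`, there is a
continuous nonnegative function `f` with `f x₀ ≤ δ` dominating every member of `F`. -/
theorem stmt17
    (X : Type*) [TopologicalSpace X] [CompactSpace X] [T2Space X]
    (x₀ : X) (δ : ℝ) (hδ : 0 < δ)
    (F : Set C(X, ℝ)) (hFtb : TotallyBounded F)
    (hFpos : ∀ g ∈ F, ∀ x, 0 ≤ g x) (hFzero : ∀ g ∈ F, g x₀ = 0) :
    ∃ f : C(X, ℝ), (∀ x, 0 ≤ f x) ∧ f x₀ ≤ δ ∧ ∀ g ∈ F, ∀ x, g x ≤ f x :=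
  stmt17_general X x₀ δ hδ F hFtb hFpos hFzero
end

section
/- Let k be a field, let A be a bialgebra over k with comultiplication Δ_A, counit ε_A and unit 1_A ≠ 0, let B be a coalgebra over k with counit ε_B which is also a unital k-algebra with unit 1_B, and let Π : A → B be a k-linear map with Π(1_A) = 1_B and ε_B ∘ Π = ε_A. Let N be a k-vector space with a left corepresentation α : N → B ⊗ N of B ((id ⊗ α) ∘ α = (Δ_B ⊗ id) ∘ α and (ε_B ⊗ id) ∘ α = id_N). Suppose ζ ∈ A ⊗ N satisfies the induction condition (id_A ⊗ Π ⊗ id_N)((Δ_A ⊗ id_N)(ζ)) = (id_A ⊗ α)(ζ) and the invariance condition (Δ_A ⊗ id_N)(ζ) = 1_A ⊗ ζ. Then ζ = 1_A ⊗ ν, where ν = (ε_A ⊗ id_N)(ζ), and ν is α-invariant: α(ν) = 1_B ⊗ ν. -/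
/-! Applying `id ⊗ ε_A ⊗ id` to the invariance condition collapses its left side to `ζ` by the
counit law and its right side to `1_A ⊗ ν`. Substituting `ζ = 1_A ⊗ ν` into the induction
condition, and using `Δ_A 1 = 1 ⊗ 1` and `Φ 1 = 1`, gives `1_A ⊗ 1_B ⊗ ν = 1_A ⊗ α ν`; the
factor `1_A ⊗ –` cancels because `ε_A ⊗ id` is a left inverse of it (`ε_A 1 = 1`). -/

open scoped TensorProduct

namespace TensorProduct

open LinearMap Coalgebra

variable {R A M : Type*} [CommSemiring R] [AddCommMonoid M] [Module R M]

section Coalgebra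

variable [AddCommMonoid A] [Module R A] [Coalgebra R A]

theorem rTensor_rid_lTensor_counit_assoc_symm_tmul (a : A) (ζ : A ⊗[R] M) :
    rTensor M ((TensorProduct.rid R A).toLinearMap ∘ₗ lTensor A (counit (R := R)))
      ((TensorProduct.assoc R A A M).symm (a ⊗ₜ[R] ζ)) =
      a ⊗ₜ[R] TensorProduct.lid R M (rTensor M (counit (R := R)) ζ) := by
  induction ζ with
  | zero => simp
  | tmul b m => simp [smul_tmul']
  | add x y hx hy => simp_all [tmul_add]

theorem eq_tmul_of_rTensor_comul_eq {a : A} {ζ : A ⊗[R] M}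
    (h : rTensor M (comul (R := R)) ζ = (TensorProduct.assoc R A A M).symm (a ⊗ₜ[R] ζ)) :
    ζ = a ⊗ₜ[R] TensorProduct.lid R M (rTensor M (counit (R := R)) ζ) := by
  have hcounit : (TensorProduct.rid R A).toLinearMap ∘ₗ lTensor A counit ∘ₗ comul =
      LinearMap.id := by
    ext a
    simp [lTensor_counit_comul]
  have h' := congrArg (rTensor M ((TensorProduct.rid R A).toLinearMap ∘ₗ lTensor A counit)) h
  rwa [← rTensor_comp_apply, LinearMap.comp_assoc, hcounit, rTensor_id, id_apply,
    rTensor_rid_lTensor_counit_assoc_symm_tmul] at h'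

end Coalgebra

section Bialgebra

variable [Semiring A] [Bialgebra R A]

theorem one_tmul_injective : Function.Injective fun m : M => (1 : A) ⊗ₜ[R] m :=
  Function.LeftInverse.injective (g := fun x => TensorProduct.lid R M (rTensor M counit x))
    fun m => by simp

end Bialgebra

end TensorProduct

theorem stmt19_general
    (k A B : Type*) [Field k]
    [Ring A] [Bialgebra k A]
    [Ring B] [Algebra k B] [Coalgebra k B]
    (Φ : A →ₗ[k] B) (hΦ1 : Φ 1 = 1)
    (N : Type*) [AddCommGroup N] [Module k N]
    (α : N →ₗ[k] B ⊗[k] N)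
    (ζ : A ⊗[k] N)
    -- induction condition: `(id_A ⊗ Φ ⊗ id_N)((Δ_A ⊗ id_N) ζ) = (id_A ⊗ α) ζ`
    (hind : (LinearMap.rTensor N (LinearMap.lTensor A Φ))
        ((LinearMap.rTensor N (Coalgebra.comul (R := k))) ζ) =
      (TensorProduct.assoc k A B N).symm ((LinearMap.lTensor A α) ζ))
    -- invariance condition: `(Δ_A ⊗ id_N) ζ = 1_A ⊗ ζ`
    (hinv : (LinearMap.rTensor N (Coalgebra.comul (R := k))) ζ =
      (TensorProduct.assoc k A A N).symm ((1 : A) ⊗ₜ[k] ζ)) :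
    ζ = (1 : A) ⊗ₜ[k]
        ((TensorProduct.lid k N) ((LinearMap.rTensor N (Coalgebra.counit (R := k))) ζ)) ∧
    α ((TensorProduct.lid k N) ((LinearMap.rTensor N (Coalgebra.counit (R := k))) ζ)) =
      (1 : B) ⊗ₜ[k]
        ((TensorProduct.lid k N) ((LinearMap.rTensor N (Coalgebra.counit (R := k))) ζ)) := by
  set ν := TensorProduct.lid k N (LinearMap.rTensor N (Coalgebra.counit (R := k)) ζ)
  have hζ : ζ = (1 : A) ⊗ₜ[k] ν := TensorProduct.eq_tmul_of_rTensor_comul_eq hinv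
  have hone : (1 : A) ⊗ₜ[k] α ν = (1 : A) ⊗ₜ[k] ((1 : B) ⊗ₜ[k] ν) := by
    have h := congrArg (TensorProduct.assoc k A B N) hind
    rw [hζ] at h
    simpa [Bialgebra.comul_one, Algebra.TensorProduct.one_def, hΦ1] using h.symm
  exact ⟨hζ, TensorProduct.one_tmul_injective hone⟩

/-- Let `A` be a bialgebra over a field `k` with `1_A ≠ 0`, `B` a coalgebra
which is also a unital algebra, `Φ : A → B` a unital counit-preserving linear map, and
`α : N → B ⊗ N` a corepresentation of `B`.  If `ζ ∈ A ⊗ N` satisfies the induction condition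
`(id ⊗ Φ ⊗ id)((Δ_A ⊗ id)ζ) = (id ⊗ α)ζ` and the invariance condition `(Δ_A ⊗ id)ζ = 1_A ⊗ ζ`,
then `ζ = 1_A ⊗ ν` with `ν = (ε_A ⊗ id)ζ`, and `ν` is `α`-invariant: `α ν = 1_B ⊗ ν`. -/
theorem stmt19
    (k A B : Type*) [Field k]
    [Ring A] [Bialgebra k A] (hA : (1 : A) ≠ 0)
    [Ring B] [Algebra k B] [Coalgebra k B]
    (Φ : A →ₗ[k] B) (hΦ1 : Φ 1 = 1)
    (hΦε : ∀ a : A, Coalgebra.counit (R := k) (Φ a) = Coalgebra.counit (R := k) a)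
    (N : Type*) [AddCommGroup N] [Module k N]
    (α : N →ₗ[k] B ⊗[k] N)
    (hαcoassoc : ∀ x : N,
      (LinearMap.lTensor B α) (α x) =
        (TensorProduct.assoc k B B N) ((LinearMap.rTensor N (Coalgebra.comul (R := k))) (α x)))
    (hαcounit : ∀ x : N,
      (TensorProduct.lid k N) ((LinearMap.rTensor N (Coalgebra.counit (R := k))) (α x)) = x)
    (ζ : A ⊗[k] N)
    -- induction condition: `(id_A ⊗ Φ ⊗ id_N)((Δ_A ⊗ id_N) ζ) = (id_A ⊗ α) ζ`
    (hind : (LinearMap.rTensor N (LinearMap.lTensor A Φ))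
        ((LinearMap.rTensor N (Coalgebra.comul (R := k))) ζ) =
      (TensorProduct.assoc k A B N).symm ((LinearMap.lTensor A α) ζ))
    -- invariance condition: `(Δ_A ⊗ id_N) ζ = 1_A ⊗ ζ`
    (hinv : (LinearMap.rTensor N (Coalgebra.comul (R := k))) ζ =
      (TensorProduct.assoc k A A N).symm ((1 : A) ⊗ₜ[k] ζ)) :
    ζ = (1 : A) ⊗ₜ[k]
        ((TensorProduct.lid k N) ((LinearMap.rTensor N (Coalgebra.counit (R := k))) ζ)) ∧
    α ((TensorProduct.lid k N) ((LinearMap.rTensor N (Coalgebra.counit (R := k))) ζ)) =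
      (1 : B) ⊗ₜ[k]
        ((TensorProduct.lid k N) ((LinearMap.rTensor N (Coalgebra.counit (R := k))) ζ)) :=
  stmt19_general k A B Φ hΦ1 N α ζ hind hinv
end
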